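/- arXiv:1012.2133 — 7 statements merged into one kernel-verified Lean document; each statement's English description precedes it below -/
import Mathlib

section
/- Let C be a d-variate copula satisfying Conditions 1 and 2 with constant K. Then for every j ∈ {1,…,d} and all u, v ∈ [0,1]^d with 0 < u_j < 1 and 0 < v_j < 1, |Ċ_j(v) − Ċ_j(u)| ≤ K · max( 1/(u_j(1−u_j)), 1/(v_j(1−v_j)) ) · ‖v − u‖₁, where ‖x‖₁ = ∑_{i=1}^d |x_i|. -/
open MeasureTheory Filter Set Function
open scoped ENNReal Topology

/-!
Join `u` to `v` by a path that changes one coordinate at a time. Along every segment of it the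
`j`-th coordinate stays between `u j` and `v j`, where `t ↦ (t (1 - t))⁻¹` is at most its value at
one of the two ends, so Condition 2 bounds the derivative of `Ċ_j` along the segment by
`K · max((u_j (1 - u_j))⁻¹, (v_j (1 - v_j))⁻¹)`; the mean value theorem and the triangle inequality
then sum the segment lengths to `‖v - u‖₁`.
-/

theorem abs_sub_le_mul_abs_sub_of_hasDerivAt {f f' : ℝ → ℝ} {a b M : ℝ}
    (hf : ContinuousOn f (uIcc a b)) (hf' : ∀ t ∈ uIoo a b, HasDerivAt f (f' t) t)
    (hM : ∀ t ∈ uIoo a b, |f' t| ≤ M) : |f b - f a| ≤ M * |b - a| := by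
  wlog hab : a < b generalizing a b
  · rcases (not_lt.1 hab).eq_or_lt with rfl | hba
    · simp
    rw [abs_sub_comm, abs_sub_comm b]
    rw [uIcc_comm] at hf
    rw [uIoo_comm] at hf' hM
    exact this hf hf' hM hba
  rw [uIcc_of_lt hab] at hf
  rw [uIoo_of_lt hab] at hf' hM
  obtain ⟨c, hc, hslope⟩ := exists_hasDerivAt_eq_slope f f' hab hf hf'
  have hba : 0 < b - a := sub_pos.2 hab
  rw [eq_div_iff hba.ne'] at hslope
  rw [← hslope, abs_mul, abs_of_pos hba]
  exact mul_le_mul_of_nonneg_right (hM c hc) hba.le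

theorem inv_mul_one_sub_le_max_of_mem_uIcc {a b t : ℝ} (ha : a ∈ Ioo 0 1) (hb : b ∈ Ioo 0 1)
    (ht : t ∈ uIcc a b) : (t * (1 - t))⁻¹ ≤ max ((a * (1 - a))⁻¹) ((b * (1 - b))⁻¹) := by
  wlog hab : a ≤ b generalizing a b
  · rw [max_comm]
    exact this hb ha (uIcc_comm a b ▸ ht) (le_of_not_ge hab)
  rw [uIcc_of_le hab] at ht
  -- `t (1 - t) - a (1 - a) = (t - a) (1 - t - a)` and `t (1 - t) - b (1 - b) = (b - t) (t + b - 1)`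
  rcases le_total (a + t) 1 with hat | hat
  · have : a * (1 - a) ≤ t * (1 - t) := by nlinarith [ht.1]
    exact (inv_anti₀ (mul_pos ha.1 (sub_pos.2 ha.2)) this).trans (le_max_left _ _)
  · have : b * (1 - b) ≤ t * (1 - t) := by nlinarith [ht.2]
    exact (inv_anti₀ (mul_pos hb.1 (sub_pos.2 hb.2)) this).trans (le_max_right _ _)

section PartialDerivBound

variable {ι : Type*} [DecidableEq ι] {f : (ι → ℝ) → ℝ} {f' : ι → (ι → ℝ) → ℝ} {j : ι} {K : ℝ}

theorem abs_sub_update_le_of_hasDerivAt_update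
    (hf : ContinuousOn f {u | u ∈ Icc 0 1 ∧ 0 < u j ∧ u j < 1})
    (hf' : ∀ i u, u ∈ Icc 0 1 → 0 < u i → u i < 1 → 0 < u j → u j < 1 →
      HasDerivAt (fun t => f (update u i t)) (f' i u) (u i))
    (hbound : ∀ i u, u ∈ Icc 0 1 → 0 < u i → u i < 1 → 0 < u j → u j < 1 →
      |f' i u| ≤ K * (u j * (1 - u j))⁻¹)
    (hK : 0 ≤ K) {z : ι → ℝ} (hz : z ∈ Icc 0 1) {i : ι} {b : ℝ} (hb : b ∈ Icc 0 1)
    {α β : ℝ} (hα : α ∈ Ioo 0 1) (hβ : β ∈ Ioo 0 1)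
    (hzj : ∀ t ∈ uIcc (z i) b, update z i t j ∈ uIcc α β) :
    |f (update z i b) - f z| ≤ K * max ((α * (1 - α))⁻¹) ((β * (1 - β))⁻¹) * |b - z i| := by
  have hzi : z i ∈ Icc 0 1 := ⟨hz.1 i, hz.2 i⟩
  have hmem : ∀ t ∈ uIcc (z i) b, update z i t ∈ Icc 0 1 := fun t ht =>
    have ht' : t ∈ Icc 0 1 := ordConnected_Icc.uIcc_subset hzi hb ht
    ⟨le_update_iff.2 ⟨ht'.1, fun k _ => hz.1 k⟩, update_le_iff.2 ⟨ht'.2, fun k _ => hz.2 k⟩⟩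
  have hzj' : ∀ t ∈ uIcc (z i) b, update z i t j ∈ Ioo 0 1 := fun t ht =>
    ordConnected_Ioo.uIcc_subset hα hβ (hzj t ht)
  have hIoo : uIoo (z i) b ⊆ Ioo 0 1 := Ioo_subset_Ioo (le_inf hzi.1 hb.1) (sup_le hzi.2 hb.2)
  rw [show f z = f (update z i (z i)) by rw [update_eq_self]]
  refine abs_sub_le_mul_abs_sub_of_hasDerivAt (f := fun t => f (update z i t))
    (f' := fun t => f' i (update z i t)) ?_ (fun t ht => ?_) (fun t ht => ?_)
  · exact hf.comp (continuous_const.update i continuous_id : Continuous (update z i)).continuousOn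
      fun t ht => ⟨hmem t ht, hzj' t ht⟩
  · have ht' := uIoo_subset_uIcc_self ht
    simpa using hf' i (update z i t) (hmem t ht') (by simpa using (hIoo ht).1)
      (by simpa using (hIoo ht).2) (hzj' t ht').1 (hzj' t ht').2
  · have ht' := uIoo_subset_uIcc_self ht
    refine (hbound i _ (hmem t ht') (by simpa using (hIoo ht).1) (by simpa using (hIoo ht).2)
      (hzj' t ht').1 (hzj' t ht').2).trans ?_
    exact mul_le_mul_of_nonneg_left (inv_mul_one_sub_le_max_of_mem_uIcc hα hβ (hzj t ht')) hK

theorem abs_sub_le_mul_sum_abs_sub_of_hasDerivAt_update [Fintype ι]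
    (hf : ContinuousOn f {u | u ∈ Icc 0 1 ∧ 0 < u j ∧ u j < 1})
    (hf' : ∀ i u, u ∈ Icc 0 1 → 0 < u i → u i < 1 → 0 < u j → u j < 1 →
      HasDerivAt (fun t => f (update u i t)) (f' i u) (u i))
    (hbound : ∀ i u, u ∈ Icc 0 1 → 0 < u i → u i < 1 → 0 < u j → u j < 1 →
      |f' i u| ≤ K * (u j * (1 - u j))⁻¹)
    (hK : 0 ≤ K) {u v : ι → ℝ} (hu : u ∈ Icc 0 1) (hv : v ∈ Icc 0 1)
    (huj : u j ∈ Ioo 0 1) (hvj : v j ∈ Ioo 0 1) :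
    |f v - f u| ≤ K * max ((u j * (1 - u j))⁻¹) ((v j * (1 - v j))⁻¹) * ∑ i, |v i - u i| := by
  set M := K * max ((u j * (1 - u j))⁻¹) ((v j * (1 - v j))⁻¹)
  suffices ∀ s : Finset ι, |f (s.piecewise v u) - f u| ≤ M * ∑ i ∈ s, |v i - u i| by
    simpa using this Finset.univ
  intro s
  induction s using Finset.induction_on with
  | empty => simp
  | insert i s hi ih =>
    set z := s.piecewise v u
    have hz : z ∈ Icc 0 1 := Finset.piecewise_mem_Icc_of_mem_of_mem s hv hu
    have hzi : z i = u i := s.piecewise_eq_of_notMem v u hi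
    have hzj : ∀ t ∈ uIcc (z i) (v i), update z i t j ∈ uIcc (u j) (v j) := by
      intro t ht
      rcases eq_or_ne j i with rfl | hji
      · simpa [hzi] using ht
      · rw [update_of_ne hji]
        by_cases hj : j ∈ s <;> simp [z, hj]
    have hstep := abs_sub_update_le_of_hasDerivAt_update hf hf' hbound hK hz
      ⟨hv.1 i, hv.2 i⟩ huj hvj hzj
    rw [hzi] at hstep
    rw [Finset.piecewise_insert, Finset.sum_insert hi, mul_add]
    calc |f (update z i (v i)) - f u|
        ≤ |f (update z i (v i)) - f z| + |f z - f u| := abs_sub_le _ _ _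
      _ ≤ M * |v i - u i| + M * ∑ k ∈ s, |v k - u k| := add_le_add hstep ih

end PartialDerivBound

theorem copula_partial_deriv_increment_bound_general
    (d : ℕ)
    -- Condition 1: the partial derivatives exist and are continuous on V_{d,j}
    (Cdot : Fin d → (Fin d → ℝ) → ℝ)
    (hcont : ∀ j : Fin d,
      ContinuousOn (Cdot j) {u : Fin d → ℝ | u ∈ Icc 0 1 ∧ 0 < u j ∧ u j < 1})
    -- Condition 2: second-order partial derivatives C̈_{ij} = ∂Ċ_j/∂u_i, continuous on
    -- V_{d,i} ∩ V_{d,j} and bounded by K·min(1/(u_i(1-u_i)), 1/(u_j(1-u_j)))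
    (K : ℝ) (hK : 0 < K)
    (Cddot : Fin d → Fin d → (Fin d → ℝ) → ℝ)
    (hderiv2 : ∀ (i j : Fin d) (u : Fin d → ℝ), u ∈ Icc 0 1 →
      0 < u i → u i < 1 → 0 < u j → u j < 1 →
      HasDerivAt (fun t => Cdot j (Function.update u i t)) (Cddot i j u) (u i))
    (hbound2 : ∀ (i j : Fin d) (u : Fin d → ℝ), u ∈ Icc 0 1 →
      0 < u i → u i < 1 → 0 < u j → u j < 1 →
      |Cddot i j u| ≤ K * min ((u i * (1 - u i))⁻¹) ((u j * (1 - u j))⁻¹)) :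
    ∀ (j : Fin d) (u v : Fin d → ℝ), u ∈ Icc 0 1 → v ∈ Icc 0 1 →
      0 < u j → u j < 1 → 0 < v j → v j < 1 →
      |Cdot j v - Cdot j u| ≤
        K * max ((u j * (1 - u j))⁻¹) ((v j * (1 - v j))⁻¹) * ∑ i, |v i - u i| := by
  intro j u v hu hv huj0 huj1 hvj0 hvj1
  exact abs_sub_le_mul_sum_abs_sub_of_hasDerivAt_update (hcont j) (hderiv2 · j)
    (fun i w hw hi0 hi1 hj0 hj1 => (hbound2 i j w hw hi0 hi1 hj0 hj1).trans
      (mul_le_mul_of_nonneg_left (min_le_right _ _) hK.le))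
    hK.le hu hv ⟨huj0, huj1⟩ ⟨hvj0, hvj1⟩

/-- **Lemma 1 (Segers).** Under Conditions 1 and 2 with constant `K`, for every `j` and all
`u, v ∈ [0,1]^d` with `0 < u_j < 1` and `0 < v_j < 1`,
`|Ċ_j(v) − Ċ_j(u)| ≤ K · max(1/(u_j(1−u_j)), 1/(v_j(1−v_j))) · ‖v − u‖₁`. -/
theorem copula_partial_deriv_increment_bound
    (d : ℕ) (hd : 1 ≤ d)
    -- the copula, as the c.d.f. of a probability measure on [0,1]^d with uniform margins
    (μ : Measure (Fin d → ℝ)) [IsProbabilityMeasure μ]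
    (hmarg : ∀ j : Fin d, ∀ t ∈ Icc (0 : ℝ) 1, μ {w | w j ≤ t} = ENNReal.ofReal t)
    (C : (Fin d → ℝ) → ℝ)
    (hC : ∀ u ∈ Icc (0 : Fin d → ℝ) 1, C u = (μ {w | ∀ j, w j ≤ u j}).toReal)
    -- Condition 1: the partial derivatives exist and are continuous on V_{d,j}
    (Cdot : Fin d → (Fin d → ℝ) → ℝ)
    (hderiv : ∀ (j : Fin d) (u : Fin d → ℝ), u ∈ Icc 0 1 → 0 < u j → u j < 1 →
      HasDerivAt (fun t => C (Function.update u j t)) (Cdot j u) (u j))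
    (hcont : ∀ j : Fin d,
      ContinuousOn (Cdot j) {u : Fin d → ℝ | u ∈ Icc 0 1 ∧ 0 < u j ∧ u j < 1})
    -- the extension of Ċ_j to the boundary faces u_j = 0 and u_j = 1
    (hext0 : ∀ (j : Fin d) (u : Fin d → ℝ), u ∈ Icc 0 1 → u j = 0 →
      Cdot j u = limsup (fun h : ℝ => C (Function.update u j h) / h) (𝓝[>] 0))
    (hext1 : ∀ (j : Fin d) (u : Fin d → ℝ), u ∈ Icc 0 1 → u j = 1 →
      Cdot j u = limsup (fun h : ℝ => (C u - C (Function.update u j (u j - h))) / h) (𝓝[>] 0))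
    -- Condition 2: second-order partial derivatives C̈_{ij} = ∂Ċ_j/∂u_i, continuous on
    -- V_{d,i} ∩ V_{d,j} and bounded by K·min(1/(u_i(1-u_i)), 1/(u_j(1-u_j)))
    (K : ℝ) (hK : 0 < K)
    (Cddot : Fin d → Fin d → (Fin d → ℝ) → ℝ)
    (hderiv2 : ∀ (i j : Fin d) (u : Fin d → ℝ), u ∈ Icc 0 1 →
      0 < u i → u i < 1 → 0 < u j → u j < 1 →
      HasDerivAt (fun t => Cdot j (Function.update u i t)) (Cddot i j u) (u i))
    (hcont2 : ∀ i j : Fin d, ContinuousOn (Cddot i j)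
      {u : Fin d → ℝ | u ∈ Icc 0 1 ∧ (0 < u i ∧ u i < 1) ∧ (0 < u j ∧ u j < 1)})
    (hbound2 : ∀ (i j : Fin d) (u : Fin d → ℝ), u ∈ Icc 0 1 →
      0 < u i → u i < 1 → 0 < u j → u j < 1 →
      |Cddot i j u| ≤ K * min ((u i * (1 - u i))⁻¹) ((u j * (1 - u j))⁻¹)) :
    ∀ (j : Fin d) (u v : Fin d → ℝ), u ∈ Icc 0 1 → v ∈ Icc 0 1 →
      0 < u j → u j < 1 → 0 < v j → v j < 1 →
      |Cdot j v - Cdot j u| ≤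
        K * max ((u j * (1 - u j))⁻¹) ((v j * (1 - v j))⁻¹) * ∑ i, |v i - u i| :=
  copula_partial_deriv_increment_bound_general d Cdot hcont K hK Cddot hderiv2 hbound2
end

section
/- Let C be a bivariate copula such that the lower tail dependence coefficient λ = lim_{u↓0} C(u,u)/u exists and is strictly positive. Then: (i) for every v ∈ (0,1], limsup_{h↓0} C(h,v)/h ≥ λ (in fact liminf_{h↓0} C(h,v)/h ≥ λ); (ii) for every u ∈ (0,1), the partial derivative Ċ_1(u,0) = lim_{h→0}(C(u+h,0) − C(u,0))/h exists and equals 0. Consequently, there is no function on [0,1]² that is continuous at (0,0) and agrees with the (extended) first partial derivative Ċ_1 of C wherever the latter is defined: Ċ_1 cannot be continuous at the point (0,0). -/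
open MeasureTheory Filter Set
open scoped ENNReal Topology

/-!
Uniform margins give `C(h, v) ≤ h` and `C(u, 0) = 0`. The first bound keeps `C(h, v)/h ≤ 1`,
and by monotonicity in `v` it dominates `C(h, h)/h → λ` for `h < v`, whence (i). By the second,
`C(·, 0)` vanishes on `[0, 1]`, whence (ii). A function continuous at `(0, 0)` would then have the
value `0` there along the first axis and a value `≥ λ > 0` along the second.
-/

theorem le_liminf_and_limsup_of_tendsto_of_le {α : Type*} {l : Filter α} [l.NeBot]
    {f g : α → ℝ} {a : ℝ} (hf : Tendsto f l (𝓝 a)) (hfg : f ≤ᶠ[l] g)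
    (hg : IsBoundedUnder (· ≤ ·) l g) :
    a ≤ liminf g l ∧ a ≤ limsup g l := by
  have ha : a ≤ liminf g l :=
    hf.liminf_eq ▸ liminf_le_liminf hfg hf.isBoundedUnder_ge hg.isCoboundedUnder_ge
  exact ⟨ha, ha.trans (liminf_le_limsup hg (hf.isBoundedUnder_ge.mono_ge hfg))⟩

theorem not_continuousWithinAt_of_lt_on_axes {g : ℝ × ℝ → ℝ} {a b : ℝ} (hab : a < b)
    (hfst : ∀ᶠ u in 𝓝[>] 0, g (u, 0) ≤ a) (hsnd : ∀ᶠ v in 𝓝[>] 0, b ≤ g (0, v)) :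
    ¬ ContinuousWithinAt g (Icc 0 1 ×ˢ Icc 0 1) (0, 0) := by
  intro hg
  have hI : Tendsto (fun u : ℝ => u) (𝓝[>] 0) (𝓝[Icc 0 1] 0) :=
    nhdsWithin_le_of_mem (Icc_mem_nhdsGT zero_lt_one)
  have h0 : Tendsto (fun _ : ℝ => (0 : ℝ)) (𝓝[>] 0) (𝓝[Icc 0 1] 0) :=
    tendsto_const_nhdsWithin (left_mem_Icc.2 zero_le_one)
  have hg' := hg.tendsto
  rw [nhdsWithin_prod_eq] at hg'
  have hle : g (0, 0) ≤ a := le_of_tendsto (hg'.comp (hI.prodMk h0)) hfst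
  have hge : b ≤ g (0, 0) := ge_of_tendsto (hg'.comp (h0.prodMk hI)) hsnd
  linarith

section Copula

variable {μ : Measure (ℝ × ℝ)} {C : ℝ → ℝ → ℝ} {u v w : ℝ}

theorem measure_fst_le_snd_le_le_ofReal
    (hmarg1 : ∀ t ∈ Icc (0 : ℝ) 1, μ {p | p.1 ≤ t} = ENNReal.ofReal t) (hu : u ∈ Icc (0 : ℝ) 1)
    (v : ℝ) : μ {p | p.1 ≤ u ∧ p.2 ≤ v} ≤ ENNReal.ofReal u :=
  hmarg1 u hu ▸ measure_mono fun _ hp => hp.1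

theorem copula_le_left
    (hmarg1 : ∀ t ∈ Icc (0 : ℝ) 1, μ {p | p.1 ≤ t} = ENNReal.ofReal t)
    (hC : ∀ u ∈ Icc (0 : ℝ) 1, ∀ v ∈ Icc (0 : ℝ) 1,
      C u v = (μ {p | p.1 ≤ u ∧ p.2 ≤ v}).toReal)
    (hu : u ∈ Icc (0 : ℝ) 1) (hv : v ∈ Icc (0 : ℝ) 1) : C u v ≤ u := by
  rw [hC u hu v hv]
  exact ENNReal.toReal_le_of_le_ofReal hu.1 (measure_fst_le_snd_le_le_ofReal hmarg1 hu v)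

theorem copula_mono_right
    (hmarg1 : ∀ t ∈ Icc (0 : ℝ) 1, μ {p | p.1 ≤ t} = ENNReal.ofReal t)
    (hC : ∀ u ∈ Icc (0 : ℝ) 1, ∀ v ∈ Icc (0 : ℝ) 1,
      C u v = (μ {p | p.1 ≤ u ∧ p.2 ≤ v}).toReal)
    (hu : u ∈ Icc (0 : ℝ) 1) (hw : w ∈ Icc (0 : ℝ) 1) (hv : v ∈ Icc (0 : ℝ) 1) (hwv : w ≤ v) :
    C u w ≤ C u v := by
  rw [hC u hu w hw, hC u hu v hv]
  exact ENNReal.toReal_mono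
    (ne_top_of_le_ne_top ENNReal.ofReal_ne_top (measure_fst_le_snd_le_le_ofReal hmarg1 hu v))
    (measure_mono fun _ hp => ⟨hp.1, hp.2.trans hwv⟩)

theorem copula_zero_right
    (hmarg2 : ∀ t ∈ Icc (0 : ℝ) 1, μ {p | p.2 ≤ t} = ENNReal.ofReal t)
    (hC : ∀ u ∈ Icc (0 : ℝ) 1, ∀ v ∈ Icc (0 : ℝ) 1,
      C u v = (μ {p | p.1 ≤ u ∧ p.2 ≤ v}).toReal)
    (hu : u ∈ Icc (0 : ℝ) 1) : C u 0 = 0 := by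
  have hnull : μ {p : ℝ × ℝ | p.2 ≤ 0} = 0 := by
    simpa using hmarg2 0 (left_mem_Icc.2 zero_le_one)
  rw [hC u hu 0 (left_mem_Icc.2 zero_le_one), measure_mono_null (fun _ hp => hp.2) hnull,
    ENNReal.toReal_zero]

theorem le_liminf_and_limsup_copula_div_of_tendsto_diag
    (hmarg1 : ∀ t ∈ Icc (0 : ℝ) 1, μ {p | p.1 ≤ t} = ENNReal.ofReal t)
    (hC : ∀ u ∈ Icc (0 : ℝ) 1, ∀ v ∈ Icc (0 : ℝ) 1,
      C u v = (μ {p | p.1 ≤ u ∧ p.2 ≤ v}).toReal)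
    {lam : ℝ} (htail : Tendsto (fun u : ℝ => C u u / u) (𝓝[>] 0) (𝓝 lam))
    (hv : v ∈ Ioc (0 : ℝ) 1) :
    lam ≤ liminf (fun h : ℝ => C h v / h) (𝓝[>] 0) ∧
      lam ≤ limsup (fun h : ℝ => C h v / h) (𝓝[>] 0) := by
  have hvI : v ∈ Icc (0 : ℝ) 1 := Ioc_subset_Icc_self hv
  have hsmall : ∀ᶠ h in 𝓝[>] (0 : ℝ), h ∈ Ioo 0 v := Ioo_mem_nhdsGT hv.1
  refine le_liminf_and_limsup_of_tendsto_of_le htail ?_ ?_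
  · filter_upwards [hsmall] with h hh
    have hhI : h ∈ Icc (0 : ℝ) 1 := ⟨hh.1.le, hh.2.le.trans hv.2⟩
    exact div_le_div_of_nonneg_right (copula_mono_right hmarg1 hC hhI hhI hvI hh.2.le) hh.1.le
  · refine isBoundedUnder_of_eventually_le (a := 1) ?_
    filter_upwards [hsmall] with h hh
    exact div_le_one_of_le₀ (copula_le_left hmarg1 hC ⟨hh.1.le, hh.2.le.trans hv.2⟩ hvI) hh.1.le

theorem hasDerivAt_copula_zero_right
    (hmarg2 : ∀ t ∈ Icc (0 : ℝ) 1, μ {p | p.2 ≤ t} = ENNReal.ofReal t)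
    (hC : ∀ u ∈ Icc (0 : ℝ) 1, ∀ v ∈ Icc (0 : ℝ) 1,
      C u v = (μ {p | p.1 ≤ u ∧ p.2 ≤ v}).toReal)
    (hu : u ∈ Ioo (0 : ℝ) 1) : HasDerivAt (fun x : ℝ => C x 0) 0 u := by
  refine (hasDerivAt_const u (0 : ℝ)).congr_of_eventuallyEq ?_
  filter_upwards [Ioo_mem_nhds hu.1 hu.2] with x hx
  exact copula_zero_right hmarg2 hC (Ioo_subset_Icc_self hx)

end Copula

theorem tail_dependence_partial_deriv_discontinuous_general
    -- the copula, as the c.d.f. of a probability measure on [0,1]² with uniform margins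
    (μ : Measure (ℝ × ℝ))
    (hmarg1 : ∀ t ∈ Icc (0 : ℝ) 1, μ {p | p.1 ≤ t} = ENNReal.ofReal t)
    (hmarg2 : ∀ t ∈ Icc (0 : ℝ) 1, μ {p | p.2 ≤ t} = ENNReal.ofReal t)
    (C : ℝ → ℝ → ℝ)
    (hC : ∀ u ∈ Icc (0 : ℝ) 1, ∀ v ∈ Icc (0 : ℝ) 1,
      C u v = (μ {p | p.1 ≤ u ∧ p.2 ≤ v}).toReal)
    -- the lower tail dependence coefficient exists and is positive
    (lam : ℝ) (hlam : 0 < lam)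
    (htail : Tendsto (fun u : ℝ => C u u / u) (𝓝[>] 0) (𝓝 lam)) :
    -- (i)
    (∀ v ∈ Ioc (0 : ℝ) 1,
      lam ≤ liminf (fun h : ℝ => C h v / h) (𝓝[>] 0) ∧
      lam ≤ limsup (fun h : ℝ => C h v / h) (𝓝[>] 0)) ∧
    -- (ii)
    (∀ u ∈ Ioo (0 : ℝ) 1, HasDerivAt (fun x : ℝ => C x 0) 0 u) ∧
    -- consequently, no function agreeing with the (extended) partial derivative Ċ_1
    -- wherever the latter is defined can be continuous at (0,0)
    ¬ ∃ g : ℝ × ℝ → ℝ,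
        (∀ u ∈ Ioo (0 : ℝ) 1, g (u, 0) = 0) ∧
        (∀ v ∈ Ioc (0 : ℝ) 1, g (0, v) = limsup (fun h : ℝ => C h v / h) (𝓝[>] 0)) ∧
        ContinuousWithinAt g (Icc (0 : ℝ) 1 ×ˢ Icc (0 : ℝ) 1) (0, 0) := by
  have hratio := fun v (hv : v ∈ Ioc (0 : ℝ) 1) ↦
    le_liminf_and_limsup_copula_div_of_tendsto_diag hmarg1 hC htail hv
  refine ⟨hratio, fun u hu ↦ hasDerivAt_copula_zero_right hmarg2 hC hu, ?_⟩
  rintro ⟨g, hg_fst, hg_snd, hg⟩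
  refine not_continuousWithinAt_of_lt_on_axes hlam ?_ ?_ hg
  · filter_upwards [Ioo_mem_nhdsGT zero_lt_one] with u hu
    exact (hg_fst u hu).le
  · filter_upwards [Ioc_mem_nhdsGT zero_lt_one] with v hv
    exact hg_snd v hv ▸ (hratio v hv).2

/-- **Example 1 (tail dependence).** If a bivariate copula `C` has a positive lower tail
dependence coefficient `λ = lim_{u↓0} C(u,u)/u > 0`, then `liminf_{h↓0} C(h,v)/h ≥ λ` (hence
also `limsup_{h↓0} C(h,v)/h ≥ λ`) for every `v ∈ (0,1]`, while `Ċ_1(u,0) = 0` for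
`u ∈ (0,1)`; consequently `Ċ_1` cannot be continuous at `(0,0)`. -/
theorem tail_dependence_partial_deriv_discontinuous
    -- the copula, as the c.d.f. of a probability measure on [0,1]² with uniform margins
    (μ : Measure (ℝ × ℝ)) [IsProbabilityMeasure μ]
    (hmarg1 : ∀ t ∈ Icc (0 : ℝ) 1, μ {p | p.1 ≤ t} = ENNReal.ofReal t)
    (hmarg2 : ∀ t ∈ Icc (0 : ℝ) 1, μ {p | p.2 ≤ t} = ENNReal.ofReal t)
    (C : ℝ → ℝ → ℝ)
    (hC : ∀ u ∈ Icc (0 : ℝ) 1, ∀ v ∈ Icc (0 : ℝ) 1,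
      C u v = (μ {p | p.1 ≤ u ∧ p.2 ≤ v}).toReal)
    -- the lower tail dependence coefficient exists and is positive
    (lam : ℝ) (hlam : 0 < lam)
    (htail : Tendsto (fun u : ℝ => C u u / u) (𝓝[>] 0) (𝓝 lam)) :
    -- (i)
    (∀ v ∈ Ioc (0 : ℝ) 1,
      lam ≤ liminf (fun h : ℝ => C h v / h) (𝓝[>] 0) ∧
      lam ≤ limsup (fun h : ℝ => C h v / h) (𝓝[>] 0)) ∧
    -- (ii)
    (∀ u ∈ Ioo (0 : ℝ) 1, HasDerivAt (fun x : ℝ => C x 0) 0 u) ∧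
    -- consequently, no function agreeing with the (extended) partial derivative Ċ_1
    -- wherever the latter is defined can be continuous at (0,0)
    ¬ ∃ g : ℝ × ℝ → ℝ,
        (∀ u ∈ Ioo (0 : ℝ) 1, g (u, 0) = 0) ∧
        (∀ v ∈ Ioc (0 : ℝ) 1, g (0, v) = limsup (fun h : ℝ => C h v / h) (𝓝[>] 0)) ∧
        ContinuousWithinAt g (Icc (0 : ℝ) 1 ×ˢ Icc (0 : ℝ) 1) (0, 0) :=
  tail_dependence_partial_deriv_discontinuous_general μ hmarg1 hmarg2 C hC lam hlam htail
end

section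
/- Let d ≥ 2 and let φ : [0,1] → [0,∞] be convex, strictly decreasing and continuous with φ(1) = 0 and φ finite on (0,1], continuously differentiable on (0,1] with φ′(u) < 0 for u ∈ (0,1), and lim_{u↓0} φ′(u) = −∞. Let φ^{-1}(x) = inf{u ∈ [0,1] : φ(u) ≤ x} for x ∈ [0,∞), and define the Archimedean function C(u) = φ^{-1}( φ(u_1) + ⋯ + φ(u_d) ) for u ∈ [0,1]^d (with φ(0) interpreted as lim_{u↓0} φ(u) ∈ (0,∞]). Then for each j ∈ {1,…,d}, the first-order partial derivative Ċ_j exists and is continuous on V_{d,j} = {u ∈ [0,1]^d : 0 < u_j < 1}, with Ċ_j(u) = φ′(u_j)/φ′(C(u)) whenever C(u) > 0 and Ċ_j(u) = 0 whenever C(u) = 0; in particular, Ċ_j(u) = 0 whenever u_i = 0 for some i ≠ j, and C satisfies Condition 1. -/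
/-!
Write `C(u) = ψ(φ(u_j) + R)` with `ψ` the generalized inverse of `φ` and `R` the sum over the
other coordinates. The map `ψ` is continuous, and where it is positive it is a genuine inverse of
`φ`, so the inverse function theorem gives `Ċ_j = φ'(u_j)/φ'(C(u))` when `C(u) > 0`. When
`C(u) = 0`, the mean value theorem and `φ'(0+) = -∞` make the slope of `φ` at `0` infinite, which
forces `t ↦ C(u with u_j := t)` to be `o(t - u_j)`. Continuity of `Ċ_j = φ'(u_j) · (1/φ')(C(u))`
then follows because `1/φ'`, extended by `0` to `(-∞, 0]`, is continuous at `0`.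
-/

open MeasureTheory Filter Set
open scoped ENNReal Topology

noncomputable section

/-- The generalized inverse `φ⁻¹(x) = inf {u ∈ [0,1] : φ(u) ≤ x}` of an Archimedean
generator, and the associated Archimedean function
`C(u) = φ⁻¹(φ(u₁) + ⋯ + φ(u_d))` (the sum being taken in `[0,∞]`). -/
def archimedean {d : ℕ} (φ : ℝ → ℝ≥0∞) (u : Fin d → ℝ) : ℝ :=
  sInf {s : ℝ | s ∈ Icc (0 : ℝ) 1 ∧ φ s ≤ ∑ j, φ (u j)}

namespace ArchimedeanGenerator

def genInv (φ : ℝ → ℝ≥0∞) (x : ℝ≥0∞) : ℝ :=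
  sInf {s : ℝ | s ∈ Icc (0 : ℝ) 1 ∧ φ s ≤ x}

theorem archimedean_eq_genInv {d : ℕ} (φ : ℝ → ℝ≥0∞) (u : Fin d → ℝ) :
    archimedean φ u = genInv φ (∑ j, φ (u j)) := rfl

section GenInv

variable {φ : ℝ → ℝ≥0∞} {x : ℝ≥0∞} {s : ℝ}

theorem genInv_le (hs : s ∈ Icc (0 : ℝ) 1) (h : φ s ≤ x) : genInv φ x ≤ s :=
  csInf_le ⟨0, fun _ ht => ht.1.1⟩ ⟨hs, h⟩

theorem genInv_mem (hφ1 : φ 1 = 0) (hcont : ContinuousOn φ (Icc 0 1)) (x : ℝ≥0∞) :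
    genInv φ x ∈ Icc (0 : ℝ) 1 ∧ φ (genInv φ x) ≤ x :=
  (hcont.preimage_isClosed_of_isClosed isClosed_Icc isClosed_Iic).csInf_mem
    ⟨1, ⟨zero_le_one, le_rfl⟩, by simp [hφ1]⟩ ⟨0, fun _ ht => ht.1.1⟩

theorem genInv_eq_zero_iff (hφ1 : φ 1 = 0) (hcont : ContinuousOn φ (Icc 0 1)) :
    genInv φ x = 0 ↔ φ 0 ≤ x :=
  ⟨fun h => h ▸ (genInv_mem hφ1 hcont x).2,
    fun h => le_antisymm (genInv_le ⟨le_rfl, zero_le_one⟩ h) (genInv_mem hφ1 hcont x).1.1⟩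

theorem apply_genInv (hφ1 : φ 1 = 0) (hcont : ContinuousOn φ (Icc 0 1))
    (hpos : 0 < genInv φ x) : φ (genInv φ x) = x := by
  set c := genInv φ x
  have hc := genInv_mem hφ1 hcont x
  have hleft : ∀ s ∈ Ico 0 c, x ≤ φ s := fun s hs =>
    le_of_not_ge fun h => hs.2.not_ge (genInv_le ⟨hs.1, hs.2.le.trans hc.1.2⟩ h)
  have : (𝓝[Ico 0 c] c).NeBot := by
    rw [← mem_closure_iff_nhdsWithin_neBot, closure_Ico hpos.ne]
    exact ⟨hpos.le, le_rfl⟩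
  exact le_antisymm hc.2 (ge_of_tendsto
    ((hcont c hc.1).mono fun s hs => ⟨hs.1, hs.2.le.trans hc.1.2⟩).tendsto
    (eventually_nhdsWithin_of_forall hleft))

theorem lt_genInv_iff (hφ1 : φ 1 = 0) (hanti : StrictAntiOn φ (Icc 0 1))
    (hcont : ContinuousOn φ (Icc 0 1)) (hs : s ∈ Ico 0 1) : s < genInv φ x ↔ x < φ s := by
  have hc := genInv_mem hφ1 hcont x
  refine ⟨fun h => lt_of_not_ge fun h' => h.not_ge (genInv_le ⟨hs.1, hs.2.le⟩ h'),
    fun h => lt_of_not_ge fun h' => ?_⟩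
  exact (hc.2.trans_lt h).not_ge (hanti.antitoneOn hc.1 ⟨hs.1, hs.2.le⟩ h')

theorem genInv_lt_iff (hφ1 : φ 1 = 0) (hanti : StrictAntiOn φ (Icc 0 1))
    (hcont : ContinuousOn φ (Icc 0 1)) (hs : s ∈ Ioc 0 1) : genInv φ x < s ↔ φ s < x := by
  have hc := genInv_mem hφ1 hcont x
  refine ⟨fun h => (hanti hc.1 ⟨hs.1.le, hs.2⟩ h).trans_le hc.2,
    fun h => lt_of_not_ge fun h' => ?_⟩
  have hφc := apply_genInv hφ1 hcont (hs.1.trans_le h')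
  exact (hφc ▸ hanti.antitoneOn ⟨hs.1.le, hs.2⟩ hc.1 h').not_gt h

theorem continuous_genInv (hφ1 : φ 1 = 0) (hanti : StrictAntiOn φ (Icc 0 1))
    (hcont : ContinuousOn φ (Icc 0 1)) : Continuous (genInv φ) := by
  refine continuous_iff_continuousAt.2 fun x₀ => tendsto_order.2 ⟨fun a ha => ?_, fun b hb => ?_⟩
  · rcases lt_or_ge a 0 with ha0 | ha0
    · exact Eventually.of_forall fun x => ha0.trans_le (genInv_mem hφ1 hcont x).1.1
    · have ha' : a ∈ Ico 0 1 := ⟨ha0, ha.trans_le (genInv_mem hφ1 hcont x₀).1.2⟩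
      rw [lt_genInv_iff hφ1 hanti hcont ha'] at ha
      filter_upwards [eventually_lt_nhds ha] with x hx
      exact (lt_genInv_iff hφ1 hanti hcont ha').2 hx
  · rcases lt_or_ge 1 b with hb1 | hb1
    · exact Eventually.of_forall fun x => (genInv_mem hφ1 hcont x).1.2.trans_lt hb1
    · have hb' : b ∈ Ioc 0 1 := ⟨(genInv_mem hφ1 hcont x₀).1.1.trans_lt hb, hb1⟩
      rw [gt_iff_lt, genInv_lt_iff hφ1 hanti hcont hb'] at hb
      filter_upwards [eventually_gt_nhds hb] with x hx
      exact (genInv_lt_iff hφ1 hanti hcont hb').2 hx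

end GenInv

theorem tendsto_slope_atBot_of_tendsto_deriv {f f' : ℝ → ℝ} {a b : ℝ} (hab : a < b)
    (hf : ContinuousOn f (Icc a b)) (hf' : ∀ x ∈ Ioo a b, HasDerivAt f (f' x) x)
    (hlim : Tendsto f' (𝓝[>] a) atBot) : Tendsto (slope f a) (𝓝[>] a) atBot := by
  refine tendsto_atBot.2 fun M => ?_
  obtain ⟨δ, hδ, hM⟩ :=
    mem_nhdsGT_iff_exists_Ioo_subset.1 (hlim.eventually (eventually_le_atBot M))
  filter_upwards [Ioo_mem_nhdsGT (lt_min hδ hab)] with c hc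
  have hcb : c < b := hc.2.trans_le (min_le_right _ _)
  obtain ⟨ξ, hξ, hslope⟩ := exists_hasDerivAt_eq_slope f f' hc.1
    (hf.mono (Icc_subset_Icc le_rfl hcb.le)) fun x hx => hf' x ⟨hx.1, hx.2.trans hcb⟩
  rw [slope_def_field, ← hslope]
  exact hM ⟨hξ.1, hξ.2.trans (hc.2.trans_le (min_le_left _ _))⟩


section PartialMap

variable {φ : ℝ → ℝ≥0∞} {φd : ℝ → ℝ} {R : ℝ≥0∞} {t₀ : ℝ}

theorem hasDerivAt_genInv_add_of_pos (hφ1 : φ 1 = 0) (hanti : StrictAntiOn φ (Icc 0 1))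
    (hcont : ContinuousOn φ (Icc 0 1)) (hfin : ∀ u ∈ Ioc (0 : ℝ) 1, φ u < ⊤)
    (hφd : ∀ u ∈ Ioo (0 : ℝ) 1, HasDerivAt (fun t => (φ t).toReal) (φd u) u)
    (hφdneg : ∀ u ∈ Ioo (0 : ℝ) 1, φd u < 0) (ht₀ : t₀ ∈ Ioo 0 1)
    (hpos : 0 < genInv φ (φ t₀ + R)) :
    HasDerivAt (fun t => genInv φ (φ t + R)) (φd t₀ * (φd (genInv φ (φ t₀ + R)))⁻¹) t₀ := by
  set c₀ := genInv φ (φ t₀ + R)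
  have hc₀ : c₀ ∈ Ioo 0 1 := ⟨hpos, (genInv_le ⟨ht₀.1.le, ht₀.2.le⟩ le_self_add).trans_lt ht₀.2⟩
  have hR : R ≠ ⊤ := by
    have := apply_genInv hφ1 hcont hpos ▸ hfin c₀ ⟨hc₀.1, hc₀.2.le⟩
    exact (ENNReal.add_lt_top.1 this).2.ne
  set F : ℝ → ℝ := fun t => (φ t).toReal
  set g : ℝ → ℝ := fun y => genInv φ (ENNReal.ofReal y)
  have hgF : ∀ t ∈ Ioc (0 : ℝ) 1, genInv φ (φ t + R) = g (F t + R.toReal) := fun t ht => by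
    simp only [g, F, ENNReal.ofReal_add ENNReal.toReal_nonneg ENNReal.toReal_nonneg,
      ENNReal.ofReal_toReal (hfin t ht).ne, ENNReal.ofReal_toReal hR]
  set y₀ := F t₀ + R.toReal
  have hgy₀ : g y₀ = c₀ := (hgF t₀ ⟨ht₀.1, ht₀.2.le⟩).symm
  have hy₀ : 0 < y₀ := by
    have hφt₀ : φ 1 < φ t₀ := hanti ⟨ht₀.1.le, ht₀.2.le⟩ ⟨zero_le_one, le_rfl⟩ ht₀.2
    have := ENNReal.toReal_pos (hφ1 ▸ hφt₀).ne' (hfin t₀ ⟨ht₀.1, ht₀.2.le⟩).ne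
    positivity
  have hg : ContinuousAt g y₀ :=
    ((continuous_genInv hφ1 hanti hcont).comp ENNReal.continuous_ofReal).continuousAt
  have hFg : ∀ᶠ y in 𝓝 y₀, F (g y) = y := by
    filter_upwards [hg.eventually (eventually_gt_nhds (hgy₀ ▸ hpos)), eventually_gt_nhds hy₀]
      with y hgy hy
    exact (congrArg ENNReal.toReal (apply_genInv hφ1 hcont hgy)).trans (ENNReal.toReal_ofReal hy.le)
  have hg' : HasDerivAt g (φd c₀)⁻¹ y₀ :=
    HasDerivAt.of_local_left_inverse hg (hgy₀ ▸ hφd c₀ hc₀) (hφdneg c₀ hc₀).ne hFg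
  rw [mul_comm]
  refine (hg'.comp t₀ ((hφd t₀ ht₀).add_const R.toReal)).congr_of_eventuallyEq ?_
  filter_upwards [isOpen_Ioo.mem_nhds ht₀] with t ht
  exact hgF t ⟨ht.1, ht.2.le⟩

theorem hasDerivAt_genInv_add_of_eq_zero (hφ1 : φ 1 = 0) (hanti : StrictAntiOn φ (Icc 0 1))
    (hcont : ContinuousOn φ (Icc 0 1)) (hfin : ∀ u ∈ Ioc (0 : ℝ) 1, φ u < ⊤)
    (hφd : ∀ u ∈ Ioo (0 : ℝ) 1, HasDerivAt (fun t => (φ t).toReal) (φd u) u)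
    (hφdinf : Tendsto φd (𝓝[>] 0) atBot) (ht₀ : t₀ ∈ Ioo 0 1)
    (hzero : genInv φ (φ t₀ + R) = 0) :
    HasDerivAt (fun t => genInv φ (φ t + R)) 0 t₀ := by
  have hφ0 := (genInv_eq_zero_iff hφ1 hcont).1 hzero
  rcases eq_or_ne R ⊤ with rfl | hR
  · simpa only [add_top] using hasDerivAt_const t₀ (genInv φ ⊤)
  have hφ0_ne_top : φ 0 ≠ ⊤ :=
    (hφ0.trans_lt (ENNReal.add_lt_top.2 ⟨hfin t₀ ⟨ht₀.1, ht₀.2.le⟩, hR.lt_top⟩)).ne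
  set F : ℝ → ℝ := fun t => (φ t).toReal
  have hF : ContinuousOn F (Icc 0 1) := fun s hs =>
    (ENNReal.continuousAt_toReal (ne_top_of_le_ne_top hφ0_ne_top
      (hanti.antitoneOn ⟨le_rfl, zero_le_one⟩ hs hs.1))).comp_continuousWithinAt (hcont s hs)
  have hslope := tendsto_slope_atBot_of_tendsto_deriv zero_lt_one hF hφd hφdinf
  have hc : Tendsto (fun t => genInv φ (φ t + R)) (𝓝 t₀) (𝓝 0) := hzero ▸
    ((continuous_genInv hφ1 hanti hcont).tendsto _).comp
      ((hcont.continuousAt (Icc_mem_nhds ht₀.1 ht₀.2)).add continuousAt_const)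
  -- Since `φ'(0+) = -∞`, a small value `c` of the partial map satisfies
  -- `c / ε ≤ F 0 - F c ≤ F t₀ - F t`, so it is `o(F t - F t₀) = o(t - t₀)`.
  have hlittle : (fun t => genInv φ (φ t + R)) =o[𝓝 t₀] fun t => F t - F t₀ := by
    refine Asymptotics.isLittleO_iff.2 fun ε hε => ?_
    obtain ⟨δ, hδ, hδslope⟩ := mem_nhdsGT_iff_exists_Ioo_subset.1
      (hslope.eventually (eventually_le_atBot (-ε⁻¹)))
    filter_upwards [hc.eventually (eventually_lt_nhds hδ)] with t hct
    set c := genInv φ (φ t + R)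
    have hc_nonneg : 0 ≤ c := (genInv_mem hφ1 hcont _).1.1
    rcases hc_nonneg.eq_or_lt with hc0 | hcpos
    · rw [← hc0, norm_zero]
      positivity
    have hφc : φ c = φ t + R := apply_genInv hφ1 hcont hcpos
    have hsum_ne_top : φ t + R ≠ ⊤ := hφc ▸ ne_top_of_le_ne_top hφ0_ne_top
      (hanti.antitoneOn ⟨le_rfl, zero_le_one⟩ (genInv_mem hφ1 hcont _).1 hcpos.le)
    have hFc : F c = F t + R.toReal := by
      simp only [F, hφc, ENNReal.toReal_add (ENNReal.add_ne_top.1 hsum_ne_top).1 hR]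
    have hF0 : F 0 ≤ F t₀ + R.toReal := by
      rw [← ENNReal.toReal_add (hfin t₀ ⟨ht₀.1, ht₀.2.le⟩).ne hR]
      exact ENNReal.toReal_mono (ENNReal.add_ne_top.2 ⟨(hfin t₀ ⟨ht₀.1, ht₀.2.le⟩).ne, hR⟩) hφ0
    have hsl : slope F 0 c ≤ -ε⁻¹ := hδslope ⟨hcpos, hct⟩
    rw [slope_def_field, sub_zero, div_le_iff₀ hcpos] at hsl
    have hbound : ε⁻¹ * c ≤ |F t - F t₀| := by
      rw [abs_sub_comm]; linarith [le_abs_self (F t₀ - F t)]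
    rw [Real.norm_eq_abs, Real.norm_eq_abs, abs_of_pos hcpos]
    calc c = ε * (ε⁻¹ * c) := by field_simp
      _ ≤ ε * |F t - F t₀| := by gcongr
  rw [hasDerivAt_iff_isLittleO]
  simpa [hzero] using hlittle.trans_isBigO (hφd t₀ ht₀).isBigO_sub

end PartialMap


def recipDeriv (φd : ℝ → ℝ) (c : ℝ) : ℝ := if 0 < c then (φd c)⁻¹ else 0

theorem continuousOn_recipDeriv {φd : ℝ → ℝ} (hφdcont : ContinuousOn φd (Ioc 0 1))
    (hφdneg : ∀ u ∈ Ioo (0 : ℝ) 1, φd u < 0) (hφdinf : Tendsto φd (𝓝[>] 0) atBot) :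
    ContinuousOn (recipDeriv φd) (Iio 1) := by
  intro c hc
  refine ContinuousAt.continuousWithinAt ?_
  rcases lt_trichotomy c 0 with hneg | rfl | hpos
  · refine (continuousAt_const (y := 0)).congr ?_
    filter_upwards [eventually_lt_nhds hneg] with x hx
    simp [recipDeriv, hx.le.not_gt]
  · rw [ContinuousAt, ← nhdsLE_sup_nhdsGT, tendsto_sup]
    simp only [recipDeriv, lt_irrefl, if_false]
    refine ⟨tendsto_const_nhds.congr' ?_, hφdinf.inv_tendsto_atBot.congr' ?_⟩
    · filter_upwards [self_mem_nhdsWithin] with x (hx : x ≤ 0)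
      simp [recipDeriv, hx.not_gt]
    · filter_upwards [self_mem_nhdsWithin] with x (hx : 0 < x)
      simp [recipDeriv, hx]
  · refine ((hφdcont.continuousAt (Ioc_mem_nhds hpos hc)).inv₀ (hφdneg c ⟨hpos, hc⟩).ne).congr ?_
    filter_upwards [eventually_gt_nhds hpos] with x hx
    simp [recipDeriv, hx]

theorem hasDerivAt_genInv_add {φ : ℝ → ℝ≥0∞} {φd : ℝ → ℝ} {R : ℝ≥0∞} {t₀ : ℝ} (hφ1 : φ 1 = 0)
    (hanti : StrictAntiOn φ (Icc 0 1)) (hcont : ContinuousOn φ (Icc 0 1))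
    (hfin : ∀ u ∈ Ioc (0 : ℝ) 1, φ u < ⊤)
    (hφd : ∀ u ∈ Ioo (0 : ℝ) 1, HasDerivAt (fun t => (φ t).toReal) (φd u) u)
    (hφdneg : ∀ u ∈ Ioo (0 : ℝ) 1, φd u < 0) (hφdinf : Tendsto φd (𝓝[>] 0) atBot)
    (ht₀ : t₀ ∈ Ioo 0 1) :
    HasDerivAt (fun t => genInv φ (φ t + R)) (φd t₀ * recipDeriv φd (genInv φ (φ t₀ + R))) t₀ := by
  rcases (genInv_mem hφ1 hcont (φ t₀ + R)).1.1.eq_or_lt with hzero | hpos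
  · rw [← hzero, recipDeriv, if_neg (lt_irrefl 0), mul_zero]
    exact hasDerivAt_genInv_add_of_eq_zero hφ1 hanti hcont hfin hφd hφdinf ht₀ hzero.symm
  · rw [recipDeriv, if_pos hpos]
    exact hasDerivAt_genInv_add_of_pos hφ1 hanti hcont hfin hφd hφdneg ht₀ hpos

section Archimedean

variable {d : ℕ}

theorem archimedean_update (φ : ℝ → ℝ≥0∞) (u : Fin d → ℝ) (j : Fin d) (t : ℝ) :
    archimedean φ (Function.update u j t) = genInv φ (φ t + ∑ i ∈ Finset.univ \ {j}, φ (u i)) := by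
  rw [archimedean_eq_genInv, ← Finset.sum_update_of_mem (Finset.mem_univ j)]
  simp only [Function.apply_update (fun _ => φ)]

theorem archimedean_le_apply (φ : ℝ → ℝ≥0∞) {u : Fin d → ℝ} {i : Fin d}
    (hi : u i ∈ Icc (0 : ℝ) 1) : archimedean φ u ≤ u i :=
  genInv_le hi (Finset.single_le_sum (f := fun k => φ (u k)) (fun _ _ => zero_le)
    (Finset.mem_univ i))

theorem continuousOn_archimedean {φ : ℝ → ℝ≥0∞} (hφ1 : φ 1 = 0) (hanti : StrictAntiOn φ (Icc 0 1))
    (hcont : ContinuousOn φ (Icc 0 1)) :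
    ContinuousOn (archimedean φ) (Icc 0 1 : Set (Fin d → ℝ)) :=
  (continuous_genInv hφ1 hanti hcont).comp_continuousOn <| continuousOn_finsetSum _
    fun i _ => hcont.comp (continuous_apply i).continuousOn fun _ hu => ⟨hu.1 i, hu.2 i⟩

end Archimedean

end ArchimedeanGenerator

open ArchimedeanGenerator

theorem archimedean_copula_condition_one_general
    (d : ℕ)
    (φ : ℝ → ℝ≥0∞)
    -- φ : [0,1] → [0,∞] is convex, strictly decreasing, continuous, φ(1) = 0,
    -- finite on (0,1] (with φ(0) = lim_{u↓0} φ(u) by continuity)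
    (hφ1 : φ 1 = 0)
    (hfin : ∀ u ∈ Ioc (0 : ℝ) 1, φ u < ⊤)
    (hanti : StrictAntiOn φ (Icc (0 : ℝ) 1))
    (hcont : ContinuousOn φ (Icc (0 : ℝ) 1))
    -- φ is continuously differentiable on (0,1], with φ' < 0 on (0,1) and φ'(0+) = −∞
    (φd : ℝ → ℝ)
    (hφd : ∀ u ∈ Ioo (0 : ℝ) 1, HasDerivAt (fun t => (φ t).toReal) (φd u) u)
    (hφdcont : ContinuousOn φd (Ioc (0 : ℝ) 1))
    (hφdneg : ∀ u ∈ Ioo (0 : ℝ) 1, φd u < 0)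
    (hφdinf : Tendsto φd (𝓝[>] (0 : ℝ)) atBot) :
    ∃ Cdot : Fin d → (Fin d → ℝ) → ℝ, ∀ j : Fin d,
      (∀ u : Fin d → ℝ, u ∈ Icc 0 1 → 0 < u j → u j < 1 →
        HasDerivAt (fun t => archimedean φ (Function.update u j t)) (Cdot j u) (u j)) ∧
      ContinuousOn (Cdot j) {u : Fin d → ℝ | u ∈ Icc 0 1 ∧ 0 < u j ∧ u j < 1} ∧
      (∀ u : Fin d → ℝ, u ∈ Icc 0 1 → 0 < u j → u j < 1 →
        (0 < archimedean φ u → Cdot j u = φd (u j) / φd (archimedean φ u)) ∧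
        (archimedean φ u = 0 → Cdot j u = 0) ∧
        ((∃ i : Fin d, i ≠ j ∧ u i = 0) → Cdot j u = 0)) := by
  refine ⟨fun j u => φd (u j) * recipDeriv φd (archimedean φ u), fun j => ⟨?_, ?_, ?_⟩⟩
  · intro u _ h0 h1
    have hu : archimedean φ u = genInv φ (φ (u j) + ∑ i ∈ Finset.univ \ {j}, φ (u i)) := by
      rw [← archimedean_update, Function.update_eq_self]
    simpa only [archimedean_update, hu] using
      hasDerivAt_genInv_add hφ1 hanti hcont hfin hφd hφdneg hφdinf ⟨h0, h1⟩
  · refine (hφdcont.comp (continuous_apply j).continuousOn fun u hu => ⟨hu.2.1, hu.2.2.le⟩).mul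
      ((continuousOn_recipDeriv hφdcont hφdneg hφdinf).comp
        ((continuousOn_archimedean hφ1 hanti hcont).mono fun u hu => hu.1) fun u hu => ?_)
    exact (archimedean_le_apply φ ⟨hu.1.1 j, hu.1.2 j⟩).trans_lt hu.2.2
  · intro u hu _ _
    refine ⟨fun hpos => by simp [recipDeriv, hpos, div_eq_mul_inv],
      fun hzero => by simp [recipDeriv, hzero], ?_⟩
    rintro ⟨i, -, hi⟩
    have hzero : archimedean φ u = 0 := le_antisymm
      (hi ▸ archimedean_le_apply φ ⟨hu.1 i, hu.2 i⟩) (genInv_mem hφ1 hcont _).1.1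
    simp [recipDeriv, hzero]

/-- **Example 3 (Archimedean copulas).** If the generator `φ` is continuously differentiable
on `(0,1]` with `φ' < 0` on `(0,1)` and `φ'(0+) = −∞`, then each first-order partial
derivative `Ċ_j` of the Archimedean function `C` exists and is continuous on
`V_{d,j} = {u ∈ [0,1]^d : 0 < u_j < 1}`, with `Ċ_j(u) = φ'(u_j)/φ'(C(u))` when `C(u) > 0`
and `Ċ_j(u) = 0` when `C(u) = 0`; in particular `Ċ_j(u) = 0` whenever `u_i = 0` for some
`i ≠ j`, and `C` satisfies Condition 1. -/
theorem archimedean_copula_condition_one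
    (d : ℕ) (hd : 2 ≤ d)
    (φ : ℝ → ℝ≥0∞)
    -- φ : [0,1] → [0,∞] is convex, strictly decreasing, continuous, φ(1) = 0,
    -- finite on (0,1] (with φ(0) = lim_{u↓0} φ(u) by continuity)
    (hφ1 : φ 1 = 0)
    (hfin : ∀ u ∈ Ioc (0 : ℝ) 1, φ u < ⊤)
    (hanti : StrictAntiOn φ (Icc (0 : ℝ) 1))
    (hcont : ContinuousOn φ (Icc (0 : ℝ) 1))
    (hconv : ConvexOn ℝ (Ioc (0 : ℝ) 1) (fun u => (φ u).toReal))
    -- φ is continuously differentiable on (0,1], with φ' < 0 on (0,1) and φ'(0+) = −∞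
    (φd : ℝ → ℝ)
    (hφd : ∀ u ∈ Ioo (0 : ℝ) 1, HasDerivAt (fun t => (φ t).toReal) (φd u) u)
    (hφd1 : HasDerivWithinAt (fun t => (φ t).toReal) (φd 1) (Iic (1 : ℝ)) 1)
    (hφdcont : ContinuousOn φd (Ioc (0 : ℝ) 1))
    (hφdneg : ∀ u ∈ Ioo (0 : ℝ) 1, φd u < 0)
    (hφdinf : Tendsto φd (𝓝[>] (0 : ℝ)) atBot) :
    ∃ Cdot : Fin d → (Fin d → ℝ) → ℝ, ∀ j : Fin d,
      (∀ u : Fin d → ℝ, u ∈ Icc 0 1 → 0 < u j → u j < 1 →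
        HasDerivAt (fun t => archimedean φ (Function.update u j t)) (Cdot j u) (u j)) ∧
      ContinuousOn (Cdot j) {u : Fin d → ℝ | u ∈ Icc 0 1 ∧ 0 < u j ∧ u j < 1} ∧
      (∀ u : Fin d → ℝ, u ∈ Icc 0 1 → 0 < u j → u j < 1 →
        (0 < archimedean φ u → Cdot j u = φd (u j) / φd (archimedean φ u)) ∧
        (archimedean φ u = 0 → Cdot j u = 0) ∧
        ((∃ i : Fin d, i ≠ j ∧ u i = 0) → Cdot j u = 0)) :=
  archimedean_copula_condition_one_general d φ hφ1 hfin hanti hcont φd hφd hφdcont hφdneg hφdinf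

end
end

section
/- Let d ≥ 2 and let φ : [0,1] → [0,∞] be convex, strictly decreasing and continuous with φ(1) = 0, φ finite on (0,1], and lim_{u↓0} φ(u) = ∞. Let φ^{-1}(x) = inf{u ∈ [0,1] : φ(u) ≤ x}, define C(u) = φ^{-1}( φ(u_1) + ⋯ + φ(u_d) ), and assume that φ^{-1} is long-tailed: lim_{x→∞} φ^{-1}(x+y)/φ^{-1}(x) = 1 for every y ∈ ℝ. Then for every u_{-1} = (u_2, …, u_d) ∈ (0,1]^{d−1}, lim_{u_1↓0} C(u_1, u_2, …, u_d)/u_1 = 1. -/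
open MeasureTheory Filter Set
open scoped ENNReal Topology

noncomputable section

/-- The generalized inverse `φ⁻¹(x) = inf {u ∈ [0,1] : φ(u) ≤ x}` of an Archimedean
generator, for `x ∈ [0,∞)`. -/
def archInv (φ : ℝ → ℝ≥0∞) (x : ℝ) : ℝ :=
  sInf {u : ℝ | u ∈ Icc (0 : ℝ) 1 ∧ φ u ≤ ENNReal.ofReal x}

/-!
With `y = φ(u₂) + ⋯ + φ(u_d) < ∞` fixed, `C(t, u₂, …, u_d) = φ⁻¹(φ(t) + y)` and `t = φ⁻¹(φ(t))`,
so `C(t, u₂, …, u_d) / t = φ⁻¹(φ(t) + y) / φ⁻¹(φ(t))`. Since `φ(t) → ∞` as `t ↓ 0`, this tends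
to `1` by long-tailedness of `φ⁻¹`.
-/

theorem archInv_toReal_apply {φ : ℝ → ℝ≥0∞} (hanti : StrictAntiOn φ (Icc (0 : ℝ) 1))
    {t : ℝ} (ht : t ∈ Icc (0 : ℝ) 1) (hφt : φ t ≠ ⊤) :
    archInv φ (φ t).toReal = t := by
  have hsublevel : {s : ℝ | s ∈ Icc (0 : ℝ) 1 ∧ φ s ≤ φ t} = Icc t 1 := by
    ext s
    refine ⟨fun ⟨hs, hle⟩ => ⟨?_, hs.2⟩, fun hs => ?_⟩
    · by_contra! hst
      exact (hanti hs ht hst).not_ge hle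
    · have hs' : s ∈ Icc (0 : ℝ) 1 := ⟨ht.1.trans hs.1, hs.2⟩
      exact ⟨hs', hanti.antitoneOn ht hs' hs.1⟩
  rw [archInv, ENNReal.ofReal_toReal hφt, hsublevel, csInf_Icc ht.2]

theorem archimedean_eq_archInv_sum {d : ℕ} {φ : ℝ → ℝ≥0∞} {u : Fin d → ℝ}
    (hu : ∀ j, φ (u j) ≠ ⊤) :
    archimedean φ u = archInv φ (∑ j, (φ (u j)).toReal) := by
  rw [archimedean, archInv,
    ENNReal.ofReal_sum_of_nonneg fun j _ => ENNReal.toReal_nonneg]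
  simp only [ENNReal.ofReal_toReal (hu _)]

theorem archimedean_update_eq_archInv {d : ℕ} {φ : ℝ → ℝ≥0∞} {u : Fin d → ℝ} {i : Fin d}
    (hu : ∀ j ≠ i, φ (u j) ≠ ⊤) {t : ℝ} (hφt : φ t ≠ ⊤) :
    archimedean φ (Function.update u i t) =
      archInv φ ((φ t).toReal + ∑ j ∈ Finset.univ \ {i}, (φ (u j)).toReal) := by
  have hupdate : ∀ j, φ (Function.update u i t j) ≠ ⊤ := by
    intro j
    rcases eq_or_ne j i with rfl | hj
    · simpa using hφt
    · simpa [hj] using hu j hj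
  rw [archimedean_eq_archInv_sum hupdate, ← Finset.sum_update_of_mem (Finset.mem_univ i)]
  congr 1
  refine Finset.sum_congr rfl fun j _ => ?_
  exact Function.apply_update (fun _ v => (φ v).toReal) u i t j

theorem tendsto_toReal_nhdsGT_zero_atTop {φ : ℝ → ℝ≥0∞}
    (hfin : ∀ u ∈ Ioc (0 : ℝ) 1, φ u < ⊤) (hinfty : Tendsto φ (𝓝[>] (0 : ℝ)) (𝓝 ⊤)) :
    Tendsto (fun t => (φ t).toReal) (𝓝[>] (0 : ℝ)) atTop := by
  refine ENNReal.tendsto_ofReal_nhds_top.mp (hinfty.congr' ?_)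
  filter_upwards [Ioo_mem_nhdsGT (zero_lt_one' ℝ)] with t ht
  exact (ENNReal.ofReal_toReal (hfin t (Ioo_subset_Ioc_self ht)).ne).symm

theorem tendsto_archimedean_update_div {d : ℕ} {φ : ℝ → ℝ≥0∞}
    (hfin : ∀ u ∈ Ioc (0 : ℝ) 1, φ u < ⊤)
    (hanti : StrictAntiOn φ (Icc (0 : ℝ) 1))
    (hinfty : Tendsto φ (𝓝[>] (0 : ℝ)) (𝓝 ⊤))
    (hlongtail : ∀ y : ℝ, Tendsto (fun x : ℝ => archInv φ (x + y) / archInv φ x) atTop (𝓝 1))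
    (i : Fin d) {u : Fin d → ℝ} (hu : ∀ j ≠ i, u j ∈ Ioc (0 : ℝ) 1) :
    Tendsto (fun t : ℝ => archimedean φ (Function.update u i t) / t) (𝓝[>] 0) (𝓝 1) := by
  set y := ∑ j ∈ Finset.univ \ {i}, (φ (u j)).toReal
  refine ((hlongtail y).comp (tendsto_toReal_nhdsGT_zero_atTop hfin hinfty)).congr' ?_
  filter_upwards [Ioo_mem_nhdsGT (zero_lt_one' ℝ)] with t ht
  have hφt : φ t ≠ ⊤ := (hfin t (Ioo_subset_Ioc_self ht)).ne
  rw [Function.comp_apply, archInv_toReal_apply hanti (Ioo_subset_Icc_self ht) hφt,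
    archimedean_update_eq_archInv (fun j hj => (hfin _ (hu j hj)).ne) hφt]

/-- **Example 3 (Archimedean copulas), continued.** If the generator `φ` satisfies
`φ(0+) = ∞` and `φ⁻¹` is long-tailed, then `C(u₁, u₂, …, u_d)/u₁ → 1` as `u₁ ↓ 0`, for every
fixed `(u₂, …, u_d) ∈ (0,1]^{d−1}`. -/
theorem archimedean_long_tailed_limit
    (d : ℕ) (hd : 2 ≤ d)
    (φ : ℝ → ℝ≥0∞)
    -- φ : [0,1] → [0,∞] is convex, strictly decreasing, continuous, φ(1) = 0,
    -- finite on (0,1], and lim_{u↓0} φ(u) = ∞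
    (hfin : ∀ u ∈ Ioc (0 : ℝ) 1, φ u < ⊤)
    (hanti : StrictAntiOn φ (Icc (0 : ℝ) 1))
    (hinfty : Tendsto φ (𝓝[>] (0 : ℝ)) (𝓝 ⊤))
    -- φ⁻¹ is long-tailed: φ⁻¹(x+y)/φ⁻¹(x) → 1 as x → ∞, for every y
    (hlongtail : ∀ y : ℝ,
      Tendsto (fun x : ℝ => archInv φ (x + y) / archInv φ x) atTop (𝓝 1)) :
    ∀ u : Fin d → ℝ, (∀ j : Fin d, j ≠ ⟨0, by omega⟩ → u j ∈ Ioc (0 : ℝ) 1) →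
      Tendsto (fun t : ℝ => archimedean φ (Function.update u ⟨0, by omega⟩ t) / t)
        (𝓝[>] 0) (𝓝 1) :=
  fun _ hu => tendsto_archimedean_update_div hfin hanti hinfty hlongtail _ hu

end
end

section
/- Let Δ_{d−1} = {w ∈ [0,1]^d : w_1 + ⋯ + w_d = 1} and let H be a non-negative finite Borel measure on Δ_{d−1} satisfying ∫ w_j H(dw) = 1 for all j ∈ {1,…,d}. Define ℓ(x) = ∫_{Δ_{d−1}} max_{j} (w_j x_j) H(dw) and the extreme-value copula C(u) = exp( −ℓ(−log u_1, …, −log u_d) ) for u ∈ (0,1]^d, extended by C(u) = 0 whenever u_j = 0 for some j. Assume that for every j ∈ {1,…,d} the partial derivative ℓ̇_j of ℓ with respect to x_j exists and is continuous on {x ∈ [0,∞)^d : x_j > 0}. Then for every j ∈ {1,…,d}, the first-order partial derivative Ċ_j of C exists and is continuous on V_{d,j} = {u ∈ [0,1]^d : 0 < u_j < 1}, with Ċ_j(u) = (C(u)/u_j) · ℓ̇_j(−log u_1, …, −log u_d) if u_i > 0 for all i, and Ċ_j(u) = 0 if u_i = 0 for some i ≠ j; in particular, C satisfies Condition 1.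 -/
open MeasureTheory Filter Set
open scoped ENNReal Topology

noncomputable section

/-- The tail dependence function `ℓ(x) = ∫_{Δ_{d−1}} max_j (w_j x_j) H(dw)` of a spectral
measure `H` on the unit simplex. -/
def tailDepFun {d : ℕ} (H : Measure (Fin d → ℝ)) (x : Fin d → ℝ) : ℝ :=
  ∫ w, (⨆ j, w j * x j) ∂H

/-- The extreme-value copula `C(u) = exp(−ℓ(−log u₁, …, −log u_d))` on `(0,1]^d`, extended
by `C(u) = 0` whenever some coordinate vanishes. -/
def evCopula {d : ℕ} (H : Measure (Fin d → ℝ)) (u : Fin d → ℝ) : ℝ :=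
  if ∀ j, 0 < u j then Real.exp (-(tailDepFun H fun j => -Real.log (u j))) else 0

/-! On `(0,1]^d` we have `C = exp ∘ (-ℓ) ∘ (-log)`, so the formula for `Ċ_j` is the chain rule,
and where some `u_i = 0` with `i ≠ j`, `C` vanishes on the whole line through `u` in direction
`e_j`. Continuity of `Ċ_j` at such boundary points comes from two bounds. The moment constraints
give `ℓ(x) ≥ x_i`, hence `C(u) ≤ u_i`. Since `H` lives on `[0,1]^d`, `ℓ` is Lipschitz with
constant `H(Δ)`, hence `|ℓ̇_j| ≤ H(Δ)`. Together, `|Ċ_j(u)| ≤ H(Δ) u_i / u_j → 0`. -/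

open Function

lemma abs_ciSup_sub_ciSup_le {ι : Type*} [Finite ι] [Nonempty ι] {f g : ι → ℝ} {c : ℝ}
    (h : ∀ i, |f i - g i| ≤ c) : |(⨆ i, f i) - ⨆ i, g i| ≤ c := by
  have key : ∀ f g : ι → ℝ, (∀ i, f i - g i ≤ c) → (⨆ i, f i) - ⨆ i, g i ≤ c :=
    fun f g h => sub_le_iff_le_add.2 <| ciSup_le fun i =>
      (sub_le_iff_le_add.1 (h i)).trans (by gcongr; exact le_ciSup (finite_range g).bddAbove i)
  exact abs_sub_le_iff.2
    ⟨key f g fun i => (abs_sub_le_iff.1 (h i)).1, key g f fun i => (abs_sub_le_iff.1 (h i)).2⟩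

lemma lipschitzWith_one_update {ι E : Type*} [Fintype ι] [DecidableEq ι] [PseudoMetricSpace E]
    (x : ι → E) (j : ι) : LipschitzWith 1 (update x j) :=
  LipschitzWith.of_dist_le_mul fun s t => by
    rw [NNReal.coe_one, one_mul, dist_pi_le_iff dist_nonneg]
    intro i
    rcases eq_or_ne i j with rfl | hij
    · simp
    · simp [update_of_ne hij]

section Coordinatewise

variable {ι : Type*} {u : ι → ℝ}

lemma forall_pos_or_exists_eq_zero (hu : 0 ≤ u) : (∀ i, 0 < u i) ∨ ∃ i, u i = 0 := by
  by_contra! h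
  obtain ⟨i, hi⟩ := h.1
  exact h.2 i (le_antisymm hi (hu i))

lemma neg_log_mem_Ici (hu : u ∈ Icc 0 1) : (fun i => -Real.log (u i)) ∈ Ici 0 :=
  fun i => neg_nonneg.2 (Real.log_nonpos (hu.1 i) (hu.2 i))

lemma continuousAt_neg_log [Fintype ι] (hu : ∀ i, 0 < u i) :
    ContinuousAt (fun v : ι → ℝ => fun i => -Real.log (v i)) u :=
  continuousAt_pi.2 fun i => (((continuous_apply i).continuousAt (x := u)).log (hu i).ne').neg

variable [Fintype ι] [Nonempty ι] {w : ι → ℝ}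

lemma lipschitzWith_iSup_mul (hw : w ∈ Icc 0 1) :
    LipschitzWith 1 fun x : ι → ℝ => ⨆ j, w j * x j :=
  LipschitzWith.of_dist_le_mul fun x y => by
    rw [NNReal.coe_one, one_mul, Real.dist_eq]
    refine abs_ciSup_sub_ciSup_le fun j => ?_
    rw [← mul_sub, abs_mul, abs_of_nonneg (hw.1 j), ← Real.dist_eq]
    exact (mul_le_of_le_one_left dist_nonneg (hw.2 j)).trans (dist_le_pi_dist x y j)

lemma abs_iSup_mul_le_norm (hw : w ∈ Icc 0 1) (x : ι → ℝ) : |⨆ j, w j * x j| ≤ ‖x‖ := by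
  simpa using (lipschitzWith_iSup_mul hw).dist_le_mul x 0

end Coordinatewise

section TailDependence

variable {d : ℕ} {H : Measure (Fin d → ℝ)} [IsFiniteMeasure H] [Nonempty (Fin d)]

lemma integrable_iSup_mul (hH : ∀ᵐ w ∂H, w ∈ Icc (0 : Fin d → ℝ) 1)
    (x : Fin d → ℝ) : Integrable (fun w => ⨆ j, w j * x j) H :=
  (integrable_const ‖x‖).mono'
    (Measurable.iSup fun j => (measurable_pi_apply j).mul_const (x j)).aestronglyMeasurable
    (hH.mono fun _ hw => (Real.norm_eq_abs _).trans_le (abs_iSup_mul_le_norm hw x))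

lemma lipschitzWith_tailDepFun (hH : ∀ᵐ w ∂H, w ∈ Icc (0 : Fin d → ℝ) 1) :
    LipschitzWith (measureUnivNNReal H) (tailDepFun H) :=
  LipschitzWith.of_dist_le_mul fun x y => by
    rw [Real.dist_eq, tailDepFun, tailDepFun,
      ← integral_sub (integrable_iSup_mul hH x) (integrable_iSup_mul hH y), ← Real.norm_eq_abs,
      mul_comm]
    refine norm_integral_le_of_norm_le_const (hH.mono fun _ hw => ?_)
    simpa [Real.dist_eq] using (lipschitzWith_iSup_mul hw).dist_le_mul x y

lemma le_tailDepFun (hH : ∀ᵐ w ∂H, w ∈ Icc (0 : Fin d → ℝ) 1)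
    (hmom : ∀ j : Fin d, ∫ w, w j ∂H = 1) (x : Fin d → ℝ) (i : Fin d) :
    x i ≤ tailDepFun H x :=
  calc x i = ∫ w, w i * x i ∂H := by rw [integral_mul_const, hmom i, one_mul]
    _ ≤ tailDepFun H x :=
      integral_mono ((Integrable.of_integral_ne_zero (by simp [hmom i])).mul_const (x i))
        (integrable_iSup_mul hH x) fun w =>
          le_ciSup (f := fun j => w j * x j) (finite_range _).bddAbove i

lemma abs_le_of_hasDerivAt_tailDepFun_update (hH : ∀ᵐ w ∂H, w ∈ Icc (0 : Fin d → ℝ) 1)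
    {x : Fin d → ℝ} {j : Fin d} {D : ℝ}
    (hD : HasDerivAt (fun t => tailDepFun H (update x j t)) D (x j)) :
    |D| ≤ measureUnivNNReal H := by
  simpa using
    hD.le_of_lipschitz ((lipschitzWith_tailDepFun hH).comp (lipschitzWith_one_update x j))

end TailDependence

section Copula

variable {d : ℕ} {H : Measure (Fin d → ℝ)}

/-- The set `V_{d,j}` of Condition 1. -/
def partialDomain (d : ℕ) (j : Fin d) : Set (Fin d → ℝ) :=
  {u | u ∈ Icc 0 1 ∧ 0 < u j ∧ u j < 1}

lemma mapsTo_neg_log_partialDomain {j : Fin d} :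
    MapsTo (fun u i => -Real.log (u i)) (partialDomain d j) {x | x ∈ Ici 0 ∧ 0 < x j} :=
  fun _ hu => ⟨neg_log_mem_Ici hu.1, neg_pos.2 (Real.log_neg hu.2.1 hu.2.2)⟩

/-- `Ċ_j(u) = C(u)/u_j · ℓ̇_j(−log u)`, where `ldj` stands for `ℓ̇_j`. Where some `u_i = 0` this
is already `0`, because `C(u) = 0` there. -/
def evCopulaPartial (H : Measure (Fin d → ℝ)) (j : Fin d) (ldj : (Fin d → ℝ) → ℝ)
    (u : Fin d → ℝ) : ℝ :=
  evCopula H u / u j * ldj fun i => -Real.log (u i)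

lemma evCopula_nonneg (u : Fin d → ℝ) : 0 ≤ evCopula H u := by
  unfold evCopula
  split_ifs <;> positivity

lemma evCopula_of_pos {u : Fin d → ℝ} (hu : ∀ i, 0 < u i) :
    evCopula H u = Real.exp (-tailDepFun H fun i => -Real.log (u i)) :=
  if_pos hu

lemma evCopula_eq_zero {u : Fin d → ℝ} {i : Fin d} (hi : u i = 0) : evCopula H u = 0 :=
  if_neg fun h => (h i).ne' hi

lemma evCopulaPartial_of_apply_eq_zero {u : Fin d → ℝ} {i j : Fin d} (hi : u i = 0)
    (ldj : (Fin d → ℝ) → ℝ) : evCopulaPartial H j ldj u = 0 := by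
  rw [evCopulaPartial, evCopula_eq_zero hi, zero_div, zero_mul]

lemma hasDerivAt_evCopula_update_of_apply_eq_zero {u : Fin d → ℝ} {i j : Fin d} (hij : i ≠ j)
    (hi : u i = 0) (ldj : (Fin d → ℝ) → ℝ) :
    HasDerivAt (fun t => evCopula H (update u j t)) (evCopulaPartial H j ldj u) (u j) := by
  have hzero : (fun t => evCopula H (update u j t)) = fun _ => 0 :=
    funext fun t => evCopula_eq_zero (i := i) (by rwa [update_of_ne hij])
  rw [hzero, evCopulaPartial_of_apply_eq_zero hi]
  exact hasDerivAt_const _ _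

lemma hasDerivAt_evCopula_update_of_pos {u : Fin d → ℝ} (hu : ∀ i, 0 < u i) {j : Fin d}
    {ldj : (Fin d → ℝ) → ℝ}
    (hℓ : HasDerivAt (fun t => tailDepFun H (update (fun i => -Real.log (u i)) j t))
      (ldj fun i => -Real.log (u i)) (-Real.log (u j))) :
    HasDerivAt (fun t => evCopula H (update u j t)) (evCopulaPartial H j ldj u) (u j) := by
  set x : Fin d → ℝ := fun i => -Real.log (u i)
  have hC := ((hℓ.comp (u j) (Real.hasDerivAt_log (hu j).ne').neg).neg).exp
  simp only [comp_def, Pi.neg_apply] at hC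
  rw [show update x j (-Real.log (u j)) = x from update_eq_self j x] at hC
  have hev : (fun t => evCopula H (update u j t)) =ᶠ[𝓝 (u j)]
      fun t => Real.exp (-tailDepFun H (update x j (-Real.log t))) := by
    filter_upwards [lt_mem_nhds (hu j)] with t ht
    rw [evCopula_of_pos fun i => ?_]
    · congr 3
      exact comp_update (fun r => -Real.log r) u j t
    · rcases eq_or_ne i j with rfl | hij
      · simpa using ht
      · simpa [update_of_ne hij] using hu i
  have hval : evCopulaPartial H j ldj u = Real.exp (-tailDepFun H x) * -(ldj x * -(u j)⁻¹) := by
    rw [evCopulaPartial, evCopula_of_pos hu]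
    ring
  exact hval ▸ hC.congr_of_eventuallyEq hev

variable [IsFiniteMeasure H] [Nonempty (Fin d)]

lemma evCopula_le_apply (hH : ∀ᵐ w ∂H, w ∈ Icc (0 : Fin d → ℝ) 1)
    (hmom : ∀ j : Fin d, ∫ w, w j ∂H = 1) {u : Fin d → ℝ} (hu : 0 ≤ u) (i : Fin d) :
    evCopula H u ≤ u i := by
  rcases forall_pos_or_exists_eq_zero hu with hpos | ⟨k, hk⟩
  · calc evCopula H u ≤ Real.exp (-(-Real.log (u i))) := by
          rw [evCopula_of_pos hpos]
          exact Real.exp_le_exp.2 (neg_le_neg (le_tailDepFun hH hmom (fun k => -Real.log (u k)) i))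
      _ = u i := by rw [neg_neg, Real.exp_log (hpos i)]
  · rw [evCopula_eq_zero hk]
    exact hu i

lemma continuousAt_evCopula (hH : ∀ᵐ w ∂H, w ∈ Icc (0 : Fin d → ℝ) 1) {u : Fin d → ℝ}
    (hu : ∀ i, 0 < u i) : ContinuousAt (evCopula H) u := by
  have hpos : ∀ᶠ v in 𝓝 u, ∀ i, 0 < v i := eventually_all.2 fun i =>
    (continuous_apply i).continuousAt.eventually (lt_mem_nhds (hu i))
  refine ContinuousAt.congr_of_eventuallyEq ?_ (hpos.mono fun v hv => evCopula_of_pos hv)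
  exact ((lipschitzWith_tailDepFun hH).continuous.continuousAt.comp
    (continuousAt_neg_log hu)).neg.rexp

lemma continuousWithinAt_evCopulaPartial_of_pos (hH : ∀ᵐ w ∂H, w ∈ Icc (0 : Fin d → ℝ) 1)
    {j : Fin d} {ldj : (Fin d → ℝ) → ℝ} (hldj : ContinuousOn ldj {x | x ∈ Ici 0 ∧ 0 < x j})
    {u : Fin d → ℝ} (hu : u ∈ partialDomain d j) (hpos : ∀ i, 0 < u i) :
    ContinuousWithinAt (evCopulaPartial H j ldj) (partialDomain d j) u :=
  ((continuousAt_evCopula hH hpos).continuousWithinAt.div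
    (continuous_apply j).continuousWithinAt (hpos j).ne').mul
    ((hldj _ (mapsTo_neg_log_partialDomain hu)).comp (continuousAt_neg_log hpos).continuousWithinAt
      mapsTo_neg_log_partialDomain)

lemma continuousWithinAt_evCopulaPartial_of_apply_eq_zero
    (hH : ∀ᵐ w ∂H, w ∈ Icc (0 : Fin d → ℝ) 1) (hmom : ∀ j : Fin d, ∫ w, w j ∂H = 1)
    {j : Fin d} {ldj : (Fin d → ℝ) → ℝ} {M : ℝ}
    (hM : ∀ u ∈ partialDomain d j, |ldj fun i => -Real.log (u i)| ≤ M)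
    {u₀ : Fin d → ℝ} {i : Fin d} (hi : u₀ i = 0) (hj : 0 < u₀ j) :
    ContinuousWithinAt (evCopulaPartial H j ldj) (partialDomain d j) u₀ := by
  rw [ContinuousWithinAt, evCopulaPartial_of_apply_eq_zero hi]
  have hlim : Tendsto (fun u : Fin d → ℝ => u i / u j * M) (𝓝[partialDomain d j] u₀) (𝓝 0) := by
    have hcont : ContinuousAt (fun u : Fin d → ℝ => u i / u j * M) u₀ :=
      ((continuous_apply i).continuousAt.div (continuous_apply j).continuousAt hj.ne').mul
        continuousAt_const
    simpa [hi] using hcont.tendsto.mono_left nhdsWithin_le_nhds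
  refine squeeze_zero_norm' (eventually_nhdsWithin_of_forall fun u hu => ?_) hlim
  rw [evCopulaPartial, Real.norm_eq_abs, abs_mul, abs_div, abs_of_nonneg (evCopula_nonneg u),
    abs_of_pos hu.2.1]
  exact mul_le_mul (div_le_div_of_nonneg_right (evCopula_le_apply hH hmom hu.1.1 i) hu.2.1.le)
    (hM u hu) (abs_nonneg _) (div_nonneg (hu.1.1 i) hu.2.1.le)

end Copula

theorem evCopula_condition_one_general
    (d : ℕ)
    (H : Measure (Fin d → ℝ)) [IsFiniteMeasure H]
    -- H is concentrated on the unit simplex Δ_{d−1}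
    (hsupp : H {w : Fin d → ℝ | ¬ (w ∈ Icc (0 : Fin d → ℝ) 1 ∧ ∑ j, w j = 1)} = 0)
    -- the d moment constraints
    (hmom : ∀ j : Fin d, ∫ w, w j ∂H = 1)
    -- partial derivatives of ℓ exist and are continuous on {x ∈ [0,∞)^d : x_j > 0}
    (ld : Fin d → (Fin d → ℝ) → ℝ)
    (hld : ∀ (j : Fin d) (x : Fin d → ℝ), x ∈ Ici (0 : Fin d → ℝ) → 0 < x j →
      HasDerivAt (fun t => tailDepFun H (Function.update x j t)) (ld j x) (x j))
    (hldcont : ∀ j : Fin d,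
      ContinuousOn (ld j) {x : Fin d → ℝ | x ∈ Ici (0 : Fin d → ℝ) ∧ 0 < x j}) :
    ∃ Cdot : Fin d → (Fin d → ℝ) → ℝ, ∀ j : Fin d,
      (∀ u : Fin d → ℝ, u ∈ Icc 0 1 → 0 < u j → u j < 1 →
        HasDerivAt (fun t => evCopula H (Function.update u j t)) (Cdot j u) (u j)) ∧
      ContinuousOn (Cdot j) {u : Fin d → ℝ | u ∈ Icc 0 1 ∧ 0 < u j ∧ u j < 1} ∧
      (∀ u : Fin d → ℝ, u ∈ Icc 0 1 → 0 < u j → u j < 1 →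
        ((∀ i, 0 < u i) →
          Cdot j u = evCopula H u / u j * ld j (fun i => -Real.log (u i))) ∧
        ((∃ i : Fin d, i ≠ j ∧ u i = 0) → Cdot j u = 0)) := by
  have hH : ∀ᵐ w ∂H, w ∈ Icc (0 : Fin d → ℝ) 1 := (ae_iff.2 hsupp).mono fun _ hw => hw.1
  refine ⟨fun j => evCopulaPartial H j (ld j), fun j => ?_⟩
  have : Nonempty (Fin d) := ⟨j⟩
  have hℓ : ∀ u ∈ partialDomain d j, HasDerivAt
      (fun t => tailDepFun H (update (fun i => -Real.log (u i)) j t))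
      (ld j fun i => -Real.log (u i)) (-Real.log (u j)) := fun u hu =>
    hld j _ (mapsTo_neg_log_partialDomain hu).1 (mapsTo_neg_log_partialDomain hu).2
  refine ⟨fun u hu huj huj1 => ?_, fun u hu => ?_, fun u _ _ _ => ⟨fun _ => rfl, ?_⟩⟩
  · rcases forall_pos_or_exists_eq_zero hu.1 with hpos | ⟨i, hi⟩
    · exact hasDerivAt_evCopula_update_of_pos hpos (hℓ u ⟨hu, huj, huj1⟩)
    · exact hasDerivAt_evCopula_update_of_apply_eq_zero
        (ne_of_apply_ne u (hi.trans_ne huj.ne)) hi _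
  · rcases forall_pos_or_exists_eq_zero hu.1.1 with hpos | ⟨i, hi⟩
    · exact continuousWithinAt_evCopulaPartial_of_pos hH (hldcont j) hu hpos
    · exact continuousWithinAt_evCopulaPartial_of_apply_eq_zero hH hmom
        (fun v hv => abs_le_of_hasDerivAt_tailDepFun_update hH (hℓ v hv)) hi hu.2.1
  · rintro ⟨i, -, hi⟩
    exact evCopulaPartial_of_apply_eq_zero hi _

/-- **Example 4 (extreme-value copulas).** If every first-order partial derivative `ℓ̇_j` of
the tail dependence function exists and is continuous on `{x ∈ [0,∞)^d : x_j > 0}`, then the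
extreme-value copula `C` satisfies Condition 1, with
`Ċ_j(u) = (C(u)/u_j) ℓ̇_j(−log u₁, …, −log u_d)` if all `u_i > 0`, and `Ċ_j(u) = 0` if
`u_i = 0` for some `i ≠ j`. -/
theorem evCopula_condition_one
    (d : ℕ) (hd : 1 ≤ d)
    (H : Measure (Fin d → ℝ)) [IsFiniteMeasure H]
    -- H is concentrated on the unit simplex Δ_{d−1}
    (hsupp : H {w : Fin d → ℝ | ¬ (w ∈ Icc (0 : Fin d → ℝ) 1 ∧ ∑ j, w j = 1)} = 0)
    -- the d moment constraints
    (hmom : ∀ j : Fin d, ∫ w, w j ∂H = 1)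
    -- partial derivatives of ℓ exist and are continuous on {x ∈ [0,∞)^d : x_j > 0}
    (ld : Fin d → (Fin d → ℝ) → ℝ)
    (hld : ∀ (j : Fin d) (x : Fin d → ℝ), x ∈ Ici (0 : Fin d → ℝ) → 0 < x j →
      HasDerivAt (fun t => tailDepFun H (Function.update x j t)) (ld j x) (x j))
    (hldcont : ∀ j : Fin d,
      ContinuousOn (ld j) {x : Fin d → ℝ | x ∈ Ici (0 : Fin d → ℝ) ∧ 0 < x j}) :
    ∃ Cdot : Fin d → (Fin d → ℝ) → ℝ, ∀ j : Fin d,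
      (∀ u : Fin d → ℝ, u ∈ Icc 0 1 → 0 < u j → u j < 1 →
        HasDerivAt (fun t => evCopula H (Function.update u j t)) (Cdot j u) (u j)) ∧
      ContinuousOn (Cdot j) {u : Fin d → ℝ | u ∈ Icc 0 1 ∧ 0 < u j ∧ u j < 1} ∧
      (∀ u : Fin d → ℝ, u ∈ Icc 0 1 → 0 < u j → u j < 1 →
        ((∀ i, 0 < u i) →
          Cdot j u = evCopula H u / u j * ld j (fun i => -Real.log (u i))) ∧
        ((∃ i : Fin d, i ≠ j ∧ u i = 0) → Cdot j u = 0)) :=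
  evCopula_condition_one_general d H hsupp hmom ld hld hldcont

end
end

section
/- Let A be a Pickands dependence function that is twice continuously differentiable on (0,1), and let C(u,v) = exp( log(uv) · A( log(v)/log(uv) ) ) for (u,v) ∈ (0,1)². Then for every (u,v) ∈ (0,1)², the mixed second-order partial derivative of C exists and equals ∂²C/∂u∂v (u,v) = ( C(u,v)/(u v) ) · ( μ(t) ν(t) − t(1−t) A″(t) / log(uv) ), where t = log(v)/log(uv) ∈ (0,1), μ(t) = A(t) − t A′(t), and ν(t) = A(t) + (1−t) A′(t). -/
open Set Filter
open scoped Topology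

noncomputable section

/-- The bivariate extreme-value copula `C(u,v) = exp(log(uv) · A(log v / log(uv)))`
associated with a Pickands dependence function `A`. -/
def evCopula2 (A : ℝ → ℝ) (u v : ℝ) : ℝ :=
  Real.exp (Real.log (u * v) * A (Real.log v / Real.log (u * v)))

/-- `t = log(v)/log(uv)`. -/
def pickT (u v : ℝ) : ℝ := Real.log v / Real.log (u * v)

/-- `μ(t) = A(t) − t A′(t)`. -/
def pickMu (A A' : ℝ → ℝ) (t : ℝ) : ℝ := A t - t * A' t

/-- `ν(t) = A(t) + (1−t) A′(t)`. -/
def pickNu (A A' : ℝ → ℝ) (t : ℝ) : ℝ := A t + (1 - t) * A' t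

/-- The claimed value of the mixed second-order partial derivative `∂²C/∂u∂v`:
`(C(u,v)/(uv)) (μ(t)ν(t) − t(1−t)A″(t)/log(uv))`. -/
def evMixedDeriv (A A' A'' : ℝ → ℝ) (u v : ℝ) : ℝ :=
  evCopula2 A u v / (u * v) *
    (pickMu A A' (pickT u v) * pickNu A A' (pickT u v) -
      pickT u v * (1 - pickT u v) * A'' (pickT u v) / Real.log (u * v))

/-! In the coordinates `a = log u`, `b = log v` one has `log C = (a + b) A(b / (a + b))`, so
`u ∂C/∂u = C μ(t)` and `v ∂C/∂v = C ν(t)` by the chain rule. Differentiating the first in `v`,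
the product rule gives the term `μ ν`, and since `μ′(t) = -t A″(t)` and
`v ∂t/∂v = (1 - t) / log(uv)`, the term `-t(1-t)A″(t)/log(uv)`. -/

theorem pickT_mem_Ioo {u v : ℝ} (hu : u ∈ Ioo (0 : ℝ) 1) (hv : v ∈ Ioo (0 : ℝ) 1) :
    pickT u v ∈ Ioo (0 : ℝ) 1 := by
  have hlu : Real.log u < 0 := Real.log_neg hu.1 hu.2
  have hlv : Real.log v < 0 := Real.log_neg hv.1 hv.2
  rw [pickT, Real.log_mul hu.1.ne' hv.1.ne']
  exact ⟨div_pos_of_neg_of_neg hlv (by linarith), (div_lt_one_of_neg (by linarith)).2 (by linarith)⟩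

theorem hasDerivAt_pickMu {A A' : ℝ → ℝ} {a'' t : ℝ} (hA : HasDerivAt A (A' t) t)
    (hA' : HasDerivAt A' a'' t) :
    HasDerivAt (pickMu A A') (-t * a'') t := by
  refine (hA.sub ((hasDerivAt_id t).mul hA')).congr_deriv ?_
  simp only [id]
  ring

theorem evCopula2_eq_exp_pickT (A : ℝ → ℝ) (u v : ℝ) :
    evCopula2 A u v = Real.exp (Real.log (u * v) * A (pickT u v)) := rfl

section PartialDerivatives

variable {A A' : ℝ → ℝ} {u v : ℝ}

theorem hasDerivAt_pickT_fst (hu : u ≠ 0) (hv : v ≠ 0) (hL : Real.log (u * v) ≠ 0) :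
    HasDerivAt (fun x => pickT x v) (-pickT u v / (u * Real.log (u * v))) u := by
  have hlog := (hasDerivAt_mul_const (x := u) v).log (mul_ne_zero hu hv)
  refine ((hasDerivAt_const u (Real.log v)).div hlog hL).congr_deriv ?_
  simp only [pickT]
  generalize Real.log (u * v) = L at hL ⊢
  field_simp
  ring

theorem hasDerivAt_pickT_snd (hu : u ≠ 0) (hv : v ≠ 0) (hL : Real.log (u * v) ≠ 0) :
    HasDerivAt (fun y => pickT u y) ((1 - pickT u v) / (v * Real.log (u * v))) v := by
  have hlog := ((hasDerivAt_id v).const_mul u).log (mul_ne_zero hu hv)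
  refine ((Real.hasDerivAt_log hv).div hlog hL).congr_deriv ?_
  simp only [pickT, id]
  generalize Real.log (u * v) = L at hL ⊢
  field_simp

theorem hasDerivAt_evCopula2_fst (hu : u ≠ 0) (hv : v ≠ 0) (hL : Real.log (u * v) ≠ 0)
    (hA : HasDerivAt A (A' (pickT u v)) (pickT u v)) :
    HasDerivAt (fun x => evCopula2 A x v) (evCopula2 A u v * pickMu A A' (pickT u v) / u) u := by
  have hlog := (hasDerivAt_mul_const (x := u) v).log (mul_ne_zero hu hv)
  refine (hlog.mul (hA.comp u (hasDerivAt_pickT_fst hu hv hL))).exp.congr_deriv ?_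
  simp only [evCopula2_eq_exp_pickT, pickMu, Pi.mul_apply, Function.comp_apply]
  generalize Real.log (u * v) = L at hL ⊢
  field_simp
  ring

theorem hasDerivAt_evCopula2_snd (hu : u ≠ 0) (hv : v ≠ 0) (hL : Real.log (u * v) ≠ 0)
    (hA : HasDerivAt A (A' (pickT u v)) (pickT u v)) :
    HasDerivAt (fun y => evCopula2 A u y) (evCopula2 A u v * pickNu A A' (pickT u v) / v) v := by
  have hlog := ((hasDerivAt_id v).const_mul u).log (mul_ne_zero hu hv)
  refine (hlog.mul (hA.comp v (hasDerivAt_pickT_snd hu hv hL))).exp.congr_deriv ?_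
  simp only [evCopula2_eq_exp_pickT, pickNu, Pi.mul_apply, Function.comp_apply, id]
  generalize Real.log (u * v) = L at hL ⊢
  field_simp

end PartialDerivatives

theorem evCopula2_mixed_second_deriv_general
    (A A' A'' : ℝ → ℝ)
    -- A is twice continuously differentiable on (0,1)
    (hA' : ∀ t ∈ Ioo (0 : ℝ) 1, HasDerivAt A (A' t) t)
    (hA'' : ∀ t ∈ Ioo (0 : ℝ) 1, HasDerivAt A' (A'' t) t) :
    ∃ D : ℝ → ℝ → ℝ, ∀ u ∈ Ioo (0 : ℝ) 1, ∀ v ∈ Ioo (0 : ℝ) 1,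
      HasDerivAt (fun x : ℝ => evCopula2 A x v) (D u v) u ∧
      HasDerivAt (fun y : ℝ => D u y) (evMixedDeriv A A' A'' u v) v := by
  refine ⟨fun u v => evCopula2 A u v * pickMu A A' (pickT u v) / u, fun u hu v hv => ?_⟩
  have hu0 : u ≠ 0 := hu.1.ne'
  have hv0 : v ≠ 0 := hv.1.ne'
  have hL : Real.log (u * v) ≠ 0 :=
    (Real.log_neg (mul_pos hu.1 hv.1) (mul_lt_one_of_nonneg_of_lt_one_left hu.1.le hu.2 hv.2.le)).ne
  have ht := pickT_mem_Ioo hu hv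
  have hmu := (hasDerivAt_pickMu (hA' _ ht) (hA'' _ ht)).comp v (hasDerivAt_pickT_snd hu0 hv0 hL)
  refine ⟨hasDerivAt_evCopula2_fst hu0 hv0 hL (hA' _ ht), ?_⟩
  refine (((hasDerivAt_evCopula2_snd hu0 hv0 hL (hA' _ ht)).mul hmu).div_const u).congr_deriv ?_
  rw [evMixedDeriv, Function.comp_apply]
  generalize Real.log (u * v) = L at hL ⊢
  field_simp
  ring

/-- **Density formula for bivariate extreme-value copulas.** If the Pickands dependence
function `A` is twice continuously differentiable on `(0,1)`, then on `(0,1)²` the mixed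
second-order partial derivative `∂²C/∂u∂v` of `C(u,v) = exp(log(uv)·A(log v/log(uv)))`
exists and equals `(C(u,v)/(uv)) (μ(t)ν(t) − t(1−t)A″(t)/log(uv))`. -/
theorem evCopula2_mixed_second_deriv
    (A A' A'' : ℝ → ℝ)
    -- A is a Pickands dependence function
    (hconv : ConvexOn ℝ (Icc (0 : ℝ) 1) A)
    (hbounds : ∀ t ∈ Icc (0 : ℝ) 1, max t (1 - t) ≤ A t ∧ A t ≤ 1)
    -- A is twice continuously differentiable on (0,1)
    (hA' : ∀ t ∈ Ioo (0 : ℝ) 1, HasDerivAt A (A' t) t)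
    (hA'' : ∀ t ∈ Ioo (0 : ℝ) 1, HasDerivAt A' (A'' t) t)
    (hA''cont : ContinuousOn A'' (Ioo (0 : ℝ) 1)) :
    ∃ D : ℝ → ℝ → ℝ, ∀ u ∈ Ioo (0 : ℝ) 1, ∀ v ∈ Ioo (0 : ℝ) 1,
      HasDerivAt (fun x : ℝ => evCopula2 A x v) (D u v) u ∧
      HasDerivAt (fun y : ℝ => D u y) (evMixedDeriv A A' A'' u v) v :=
  evCopula2_mixed_second_deriv_general A A' A'' hA' hA''
end
end

section
/- For θ ∈ (0,1], let A_θ(t) = ( t^{1/θ} + (1−t)^{1/θ} )^{θ} for t ∈ [0,1] be the Pickands dependence function of the Gumbel extreme-value copula. Then A_θ is twice continuously differentiable on (0,1) and sup_{0<t<1} t(1−t) A_θ″(t) < ∞ (even though, for 1/2 < θ < 1, A_θ″(t) → ∞ as t → 0 and as t → 1). -/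
open Set Filter
open scoped Topology

noncomputable section

/-- The Pickands dependence function of the Gumbel extreme-value copula,
`A_θ(t) = (t^{1/θ} + (1−t)^{1/θ})^θ`. -/
def gumbelA (θ : ℝ) (t : ℝ) : ℝ :=
  (t ^ (1 / θ) + (1 - t) ^ (1 / θ)) ^ θ

/-!
Write `p = 1/θ ≥ 1` and `S(t) = t^p + (1-t)^p`, so that `A_θ = S^θ` and
`A_θ'' = θ S^(θ-1) S'' + θ(θ-1) S^(θ-2) S'^2`. On `(0,1)` we have `(1/2)^p ≤ S ≤ 1` and
`|S'| ≤ p`, so the second summand is nonpositive and bounded. Since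
`t(1-t)S''(t) = p(p-1)((1-t)t^(p-1) + t(1-t)^(p-1)) ≤ p(p-1)`, the first summand keeps
`t(1-t)A_θ''` bounded above, while `S^(θ-1) ≥ 1` gives `A_θ''(t) ≥ (p-1)t^(p-2) - C` for a
constant `C`, which blows up at `0` when `1 < p < 2`. The symmetry `A_θ''(1-t) = A_θ''(t)`
carries this over to `1`.
-/

lemma tendsto_one_sub_nhdsLT_one : Tendsto (fun t : ℝ ↦ 1 - t) (𝓝[<] 1) (𝓝[>] 0) := by
  refine tendsto_nhdsWithin_of_tendsto_nhds_of_eventually_within _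
    (((continuous_sub_left (1 : ℝ)).tendsto' 1 0 (sub_self 1)).mono_left nhdsWithin_le_nhds) ?_
  filter_upwards [self_mem_nhdsWithin] with t ht
  exact sub_pos.2 (mem_Iio.1 ht)

namespace Gumbel

open Real

def powSum (p t : ℝ) : ℝ := t ^ p + (1 - t) ^ p

def powSumDeriv (p t : ℝ) : ℝ := p * (t ^ (p - 1) - (1 - t) ^ (p - 1))

def powSumDeriv2 (p t : ℝ) : ℝ := p * (p - 1) * (t ^ (p - 2) + (1 - t) ^ (p - 2))

variable {p t : ℝ}

lemma powSum_one_sub (p t : ℝ) : powSum p (1 - t) = powSum p t := by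
  simp only [powSum, sub_sub_cancel, add_comm]

lemma powSumDeriv_one_sub (p t : ℝ) : powSumDeriv p (1 - t) = -powSumDeriv p t := by
  simp only [powSumDeriv, sub_sub_cancel]; ring

lemma powSumDeriv2_one_sub (p t : ℝ) : powSumDeriv2 p (1 - t) = powSumDeriv2 p t := by
  simp only [powSumDeriv2, sub_sub_cancel, add_comm]

lemma powSum_pos (ht : t ∈ Ioo (0 : ℝ) 1) : 0 < powSum p t :=
  add_pos (rpow_pos_of_pos ht.1 p) (rpow_pos_of_pos (sub_pos.2 ht.2) p)

lemma hasDerivAt_powSum (ht : t ∈ Ioo (0 : ℝ) 1) :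
    HasDerivAt (powSum p) (powSumDeriv p t) t := by
  have h₁ := hasDerivAt_rpow_const (p := p) (Or.inl ht.1.ne')
  have h₂ := ((hasDerivAt_id t).const_sub 1).rpow_const (p := p) (Or.inl (sub_pos.2 ht.2).ne')
  refine (h₁.add h₂).congr_deriv ?_
  simp only [powSumDeriv, id]; ring

lemma hasDerivAt_powSumDeriv (ht : t ∈ Ioo (0 : ℝ) 1) :
    HasDerivAt (powSumDeriv p) (powSumDeriv2 p t) t := by
  have h₁ := hasDerivAt_rpow_const (p := p - 1) (Or.inl ht.1.ne')
  have h₂ := ((hasDerivAt_id t).const_sub 1).rpow_const (p := p - 1)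
    (Or.inl (sub_pos.2 ht.2).ne')
  refine ((h₁.sub h₂).const_mul p).congr_deriv ?_
  simp only [id, powSumDeriv2, show p - 1 - 1 = p - 2 by ring]; ring

lemma continuousOn_powSum : ContinuousOn (powSum p) (Ioo 0 1) :=
  fun _ ht ↦ (hasDerivAt_powSum ht).continuousAt.continuousWithinAt

lemma continuousOn_powSumDeriv : ContinuousOn (powSumDeriv p) (Ioo 0 1) :=
  fun _ ht ↦ (hasDerivAt_powSumDeriv ht).continuousAt.continuousWithinAt

lemma continuousOn_powSumDeriv2 : ContinuousOn (powSumDeriv2 p) (Ioo 0 1) := fun t ht ↦ by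
  apply ContinuousAt.continuousWithinAt
  unfold powSumDeriv2
  fun_prop (disch := exact Or.inl (by linarith [ht.1, ht.2]))

lemma powSum_le_one (hp : 1 ≤ p) (ht : t ∈ Icc (0 : ℝ) 1) : powSum p t ≤ 1 := by
  have h₁ := rpow_le_self_of_le_one ht.1 ht.2 hp
  have h₂ := rpow_le_self_of_le_one (sub_nonneg.2 ht.2) (by linarith [ht.1]) hp
  simp only [powSum]; linarith

lemma half_rpow_le_powSum (hp : 0 ≤ p) (ht : t ∈ Icc (0 : ℝ) 1) : (1 / 2) ^ p ≤ powSum p t := by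
  have h₁ := rpow_nonneg ht.1 p
  have h₂ := rpow_nonneg (sub_nonneg.2 ht.2) p
  simp only [powSum]
  rcases le_total t (1 / 2) with h | h
  · linarith [rpow_le_rpow (by norm_num) (by linarith : (1 : ℝ) / 2 ≤ 1 - t) hp]
  · linarith [rpow_le_rpow (by norm_num) h hp]

lemma sq_powSumDeriv_le (hp : 1 ≤ p) (ht : t ∈ Icc (0 : ℝ) 1) :
    powSumDeriv p t ^ 2 ≤ p ^ 2 := by
  have hp' : 0 ≤ p - 1 := sub_nonneg.2 hp
  have ht' : 0 ≤ 1 - t := sub_nonneg.2 ht.2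
  have hdiff : |t ^ (p - 1) - (1 - t) ^ (p - 1)| ≤ 1 :=
    abs_sub_le_of_nonneg_of_le (rpow_nonneg ht.1 _) (rpow_le_one ht.1 ht.2 hp')
      (rpow_nonneg ht' _) (rpow_le_one ht' (by linarith [ht.1]) hp')
  rw [powSumDeriv, mul_pow, ← sq_abs (_ - _)]
  exact mul_le_of_le_one_right (sq_nonneg p) (pow_le_one₀ (abs_nonneg _) hdiff)

lemma powSumDeriv2_nonneg (hp : 1 ≤ p) (ht : t ∈ Ioo (0 : ℝ) 1) : 0 ≤ powSumDeriv2 p t :=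
  mul_nonneg (mul_nonneg (by linarith) (sub_nonneg.2 hp))
    (add_nonneg (rpow_nonneg ht.1.le _) (rpow_nonneg (sub_pos.2 ht.2).le _))

lemma mul_one_sub_mul_powSumDeriv2_le (hp : 1 ≤ p) (ht : t ∈ Ioo (0 : ℝ) 1) :
    t * (1 - t) * powSumDeriv2 p t ≤ p * (p - 1) := by
  obtain ⟨ht₀, ht₁⟩ := ht
  have ht₁' : 0 < 1 - t := sub_pos.2 ht₁
  have hp' : 0 ≤ p - 1 := sub_nonneg.2 hp
  have h₁ : t ^ (p - 2) * t ≤ 1 := by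
    rw [← rpow_add_one ht₀.ne', show p - 2 + 1 = p - 1 by ring]
    exact rpow_le_one ht₀.le ht₁.le hp'
  have h₂ : (1 - t) ^ (p - 2) * (1 - t) ≤ 1 := by
    rw [← rpow_add_one ht₁'.ne', show p - 2 + 1 = p - 1 by ring]
    exact rpow_le_one ht₁'.le (by linarith) hp'
  calc t * (1 - t) * powSumDeriv2 p t
      = p * (p - 1) * ((1 - t) * (t ^ (p - 2) * t) + t * ((1 - t) ^ (p - 2) * (1 - t))) := by
        simp only [powSumDeriv2]; ring
    _ ≤ p * (p - 1) * ((1 - t) * 1 + t * 1) := by gcongr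
    _ = p * (p - 1) := by ring

lemma le_powSumDeriv2 (hp : 1 ≤ p) (ht : t ∈ Ioo (0 : ℝ) 1) :
    p * (p - 1) * t ^ (p - 2) ≤ powSumDeriv2 p t := by
  have : 0 ≤ p * (p - 1) := mul_nonneg (by linarith) (by linarith)
  have := rpow_nonneg (sub_pos.2 ht.2).le (p - 2)
  simp only [powSumDeriv2]
  nlinarith

def gumbelADeriv (θ t : ℝ) : ℝ := θ * powSum (1 / θ) t ^ (θ - 1) * powSumDeriv (1 / θ) t

def gumbelADeriv2 (θ t : ℝ) : ℝ :=
  θ * powSum (1 / θ) t ^ (θ - 1) * powSumDeriv2 (1 / θ) t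
    + θ * (θ - 1) * powSum (1 / θ) t ^ (θ - 2) * powSumDeriv (1 / θ) t ^ 2

variable {θ : ℝ}

lemma hasDerivAt_gumbelA (ht : t ∈ Ioo (0 : ℝ) 1) :
    HasDerivAt (gumbelA θ) (gumbelADeriv θ t) t := by
  refine ((hasDerivAt_powSum ht).rpow_const (Or.inl (powSum_pos ht).ne')).congr_deriv ?_
  simp only [gumbelADeriv]; ring

lemma hasDerivAt_gumbelADeriv (ht : t ∈ Ioo (0 : ℝ) 1) :
    HasDerivAt (gumbelADeriv θ) (gumbelADeriv2 θ t) t := by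
  have hS := (hasDerivAt_powSum (p := 1 / θ) ht).rpow_const (p := θ - 1)
    (Or.inl (powSum_pos ht).ne')
  refine ((hS.const_mul θ).mul (hasDerivAt_powSumDeriv ht)).congr_deriv ?_
  simp only [gumbelADeriv2, show θ - 1 - 1 = θ - 2 by ring]; ring

lemma continuousOn_gumbelADeriv2 : ContinuousOn (gumbelADeriv2 θ) (Ioo 0 1) := by
  have hS := continuousOn_powSum (p := 1 / θ)
  have hpos : ∀ t ∈ Ioo (0 : ℝ) 1, powSum (1 / θ) t ≠ 0 := fun t ht ↦ (powSum_pos ht).ne'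
  unfold gumbelADeriv2
  exact ((continuousOn_const.mul (hS.rpow_const fun t ht ↦ Or.inl (hpos t ht))).mul
    continuousOn_powSumDeriv2).add
    ((continuousOn_const.mul (hS.rpow_const fun t ht ↦ Or.inl (hpos t ht))).mul
      (continuousOn_powSumDeriv.pow 2))

lemma gumbelADeriv2_one_sub (θ t : ℝ) : gumbelADeriv2 θ (1 - t) = gumbelADeriv2 θ t := by
  simp only [gumbelADeriv2, powSum_one_sub, powSumDeriv_one_sub, powSumDeriv2_one_sub, neg_sq]

lemma mul_one_sub_mul_gumbelADeriv2_le (hθ : θ ∈ Ioc (0 : ℝ) 1) (ht : t ∈ Ioo (0 : ℝ) 1) :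
    t * (1 - t) * gumbelADeriv2 θ t ≤ ((1 / 2) ^ (1 / θ)) ^ (θ - 1) * (1 / θ - 1) := by
  obtain ⟨hθ₀, hθ₁⟩ := hθ
  have hp : 1 ≤ 1 / θ := one_le_one_div hθ₀ hθ₁
  have hS := powSum_pos (p := 1 / θ) ht
  have hS_pow : powSum (1 / θ) t ^ (θ - 1) ≤ ((1 / 2) ^ (1 / θ)) ^ (θ - 1) :=
    rpow_le_rpow_of_nonpos (by positivity)
      (half_rpow_le_powSum (by linarith) (Ioo_subset_Icc_self ht)) (by linarith)
  have hsecond_nonpos : θ * (θ - 1) * powSum (1 / θ) t ^ (θ - 2) * powSumDeriv (1 / θ) t ^ 2 ≤ 0 :=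
    mul_nonpos_of_nonpos_of_nonneg
      (mul_nonpos_of_nonpos_of_nonneg (mul_nonpos_of_nonneg_of_nonpos hθ₀.le (by linarith))
        (rpow_nonneg hS.le _)) (sq_nonneg _)
  have ht' : 0 ≤ t * (1 - t) := mul_nonneg ht.1.le (sub_pos.2 ht.2).le
  calc t * (1 - t) * gumbelADeriv2 θ t
      ≤ θ * powSum (1 / θ) t ^ (θ - 1) * (t * (1 - t) * powSumDeriv2 (1 / θ) t) := by
        rw [gumbelADeriv2]; nlinarith
    _ ≤ θ * ((1 / 2) ^ (1 / θ)) ^ (θ - 1) * (1 / θ * (1 / θ - 1)) := by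
        gcongr θ * ?_ * ?_
        · exact mul_nonneg ht' (powSumDeriv2_nonneg hp ht)
        · exact mul_one_sub_mul_powSumDeriv2_le hp ht
    _ = ((1 / 2) ^ (1 / θ)) ^ (θ - 1) * (1 / θ - 1) := by field_simp

lemma le_gumbelADeriv2 (hθ : θ ∈ Ioc (0 : ℝ) 1) (ht : t ∈ Ioo (0 : ℝ) 1) :
    (1 / θ - 1) * t ^ (1 / θ - 2) + θ * (θ - 1) * ((1 / 2) ^ (1 / θ)) ^ (θ - 2) * (1 / θ) ^ 2
      ≤ gumbelADeriv2 θ t := by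
  obtain ⟨hθ₀, hθ₁⟩ := hθ
  have hp : 1 ≤ 1 / θ := one_le_one_div hθ₀ hθ₁
  have ht' := Ioo_subset_Icc_self ht
  have hS := powSum_pos (p := 1 / θ) ht
  have h₁ : (1 / θ - 1) * t ^ (1 / θ - 2)
      ≤ θ * powSum (1 / θ) t ^ (θ - 1) * powSumDeriv2 (1 / θ) t := by
    have hS_pow : 1 ≤ powSum (1 / θ) t ^ (θ - 1) :=
      one_le_rpow_of_pos_of_le_one_of_nonpos hS (powSum_le_one hp ht') (by linarith)
    calc (1 / θ - 1) * t ^ (1 / θ - 2) = θ * 1 * (1 / θ * (1 / θ - 1) * t ^ (1 / θ - 2)) := by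
          field_simp
      _ ≤ θ * powSum (1 / θ) t ^ (θ - 1) * powSumDeriv2 (1 / θ) t := by
          gcongr θ * ?_ * ?_
          · exact mul_nonneg (mul_nonneg (by positivity) (by linarith)) (rpow_nonneg ht.1.le _)
          · exact le_powSumDeriv2 hp ht
  have h₂ : θ * (θ - 1) * ((1 / 2) ^ (1 / θ)) ^ (θ - 2) * (1 / θ) ^ 2
      ≤ θ * (θ - 1) * powSum (1 / θ) t ^ (θ - 2) * powSumDeriv (1 / θ) t ^ 2 := by
    simp only [mul_assoc (θ * (θ - 1))]
    refine mul_le_mul_of_nonpos_left ?_ (mul_nonpos_of_nonneg_of_nonpos hθ₀.le (by linarith))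
    exact mul_le_mul (rpow_le_rpow_of_nonpos (by positivity)
      (half_rpow_le_powSum (by linarith) ht') (by linarith)) (sq_powSumDeriv_le hp ht')
      (sq_nonneg _) (by positivity)
  rw [gumbelADeriv2]
  exact add_le_add h₁ h₂

lemma tendsto_gumbelADeriv2_nhdsGT_zero (hθ : θ ∈ Ioo (1 / 2 : ℝ) 1) :
    Tendsto (gumbelADeriv2 θ) (𝓝[>] 0) atTop := by
  obtain ⟨hθ₀, hθ₁⟩ := hθ
  have hcoeff : 0 < 1 / θ - 1 := sub_pos.2 (one_lt_one_div (by linarith) hθ₁)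
  have hexp : 1 / θ - 2 < 0 := by
    rw [sub_neg, div_lt_iff₀ (by linarith)]; linarith
  have hlower := fun t ↦ le_gumbelADeriv2 (t := t) ⟨by linarith, hθ₁.le⟩
  refine tendsto_atTop_mono' _ (eventually_of_mem (Ioo_mem_nhdsGT zero_lt_one) hlower)
    (tendsto_atTop_add_const_right _ _
      ((tendsto_rpow_neg_nhdsGT_zero hexp).const_mul_atTop hcoeff))

lemma tendsto_gumbelADeriv2_nhdsLT_one (hθ : θ ∈ Ioo (1 / 2 : ℝ) 1) :
    Tendsto (gumbelADeriv2 θ) (𝓝[<] 1) atTop := by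
  simpa only [Function.comp_def, gumbelADeriv2_one_sub] using
    (tendsto_gumbelADeriv2_nhdsGT_zero hθ).comp tendsto_one_sub_nhdsLT_one

end Gumbel

open Gumbel

/-- **Gumbel dependence function.** For `θ ∈ (0,1]`, `A_θ` is twice continuously
differentiable on `(0,1)` and `sup_{0<t<1} t(1−t)A_θ″(t) < ∞`, even though for
`1/2 < θ < 1` one has `A_θ″(t) → ∞` as `t → 0` and as `t → 1`. -/
theorem gumbelA_second_deriv_growth
    (θ : ℝ) (hθ : θ ∈ Ioc (0 : ℝ) 1) :
    ∃ A' A'' : ℝ → ℝ,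
      (∀ t ∈ Ioo (0 : ℝ) 1, HasDerivAt (gumbelA θ) (A' t) t) ∧
      (∀ t ∈ Ioo (0 : ℝ) 1, HasDerivAt A' (A'' t) t) ∧
      ContinuousOn A' (Ioo (0 : ℝ) 1) ∧
      ContinuousOn A'' (Ioo (0 : ℝ) 1) ∧
      (∃ M : ℝ, ∀ t ∈ Ioo (0 : ℝ) 1, t * (1 - t) * A'' t ≤ M) ∧
      (1 / 2 < θ → θ < 1 →
        Tendsto A'' (𝓝[>] (0 : ℝ)) atTop ∧ Tendsto A'' (𝓝[<] (1 : ℝ)) atTop) :=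
  ⟨gumbelADeriv θ, gumbelADeriv2 θ, fun _ ↦ hasDerivAt_gumbelA, fun _ ↦ hasDerivAt_gumbelADeriv,
    fun _ ht ↦ (hasDerivAt_gumbelADeriv ht).continuousAt.continuousWithinAt,
    continuousOn_gumbelADeriv2, ⟨_, fun _ ↦ mul_one_sub_mul_gumbelADeriv2_le hθ⟩,
    fun h₁ h₂ ↦ ⟨tendsto_gumbelADeriv2_nhdsGT_zero ⟨h₁, h₂⟩,
      tendsto_gumbelADeriv2_nhdsLT_one ⟨h₁, h₂⟩⟩⟩

end
end
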